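/- arXiv:1409.5882 — 10 statements merged into one kernel-verified Lean document; each statement's English description precedes it below -/
import Mathlib

section
/- If a graph G with m edges has spectral radius λ₁ > √m, then G contains a triangle (Nosal's Theorem). -/
/-!
Let `x` be an eigenvector for `λ` and `u` a vertex where `|x|` is largest. Applying the
eigenvalue equation twice bounds `λ² |x u|` by a sum of `|x|` over the walks of length two
starting at `u`, hence by `|x u|` times `∑_{w ~ u} deg w`. In a triangle-free graph the
neighbourhood of `u` is independent, so the edges at distinct neighbours of `u` are distinct
and `∑_{w ~ u} deg w ≤ m`. Thus `λ² ≤ m`.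
-/

namespace SimpleGraph

variable {V : Type*} [Fintype V] {G : SimpleGraph V} [DecidableRel G.Adj]

theorem abs_mul_abs_le_sum_abs_of_adjMatrix_mulVec_eq {μ : ℝ} {x : V → ℝ}
    (hx : (G.adjMatrix ℝ).mulVec x = μ • x) (v : V) :
    |μ| * |x v| ≤ ∑ w ∈ G.neighborFinset v, |x w| := by
  have hv : μ * x v = ∑ w ∈ G.neighborFinset v, x w := by
    rw [← adjMatrix_mulVec_apply, hx, Pi.smul_apply, smul_eq_mul]
  rw [← abs_mul, hv]
  exact Finset.abs_sum_le_sum_abs _ _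

/-- The edges `s(w, z)` with `w ~ u` and `w ~ z` are pairwise distinct: a coincidence
`s(w, z) = s(z, w)` with `w ≠ z` would make `{u, w, z}` a triangle. -/
theorem CliqueFree.sum_degree_neighborFinset_le_card_edgeFinset [DecidableEq V] (hG : G.CliqueFree 3) (u : V) :
    ∑ w ∈ G.neighborFinset u, G.degree w ≤ G.edgeFinset.card := by
  simp_rw [← card_neighborFinset_eq_degree]
  rw [← Finset.card_sigma]
  refine Finset.card_le_card_of_injOn (fun p ↦ s(p.1, p.2)) ?_ ?_
  · rintro ⟨w, z⟩ hwz
    simp only [Finset.mem_coe, Finset.mem_sigma, mem_neighborFinset] at hwz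
    simpa using hwz.2
  · rintro ⟨w, z⟩ hwz ⟨w', z'⟩ hwz' heq
    simp only [Finset.mem_coe, Finset.mem_sigma, mem_neighborFinset] at hwz hwz'
    obtain ⟨rfl, rfl⟩ | ⟨rfl, rfl⟩ := Sym2.eq_iff.mp heq
    · rfl
    · exact absurd (is3Clique_triple_iff.mpr ⟨hwz.1, hwz'.1, hwz.2⟩) (hG {u, w, z})

theorem CliqueFree.sq_le_card_edgeFinset_of_adjMatrix_mulVec_eq [DecidableEq V]
    (hG : G.CliqueFree 3) {μ : ℝ} {x : V → ℝ} (hx0 : x ≠ 0) (hx : (G.adjMatrix ℝ).mulVec x = μ • x) :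
    μ ^ 2 ≤ G.edgeFinset.card := by
  obtain ⟨v, hv⟩ := Function.ne_iff.mp hx0
  have : Nonempty V := ⟨v⟩
  obtain ⟨u, hu⟩ := Finite.exists_max fun w ↦ |x w|
  have hxu : 0 < |x u| := (abs_pos.mpr hv).trans_le (hu v)
  have hstep := abs_mul_abs_le_sum_abs_of_adjMatrix_mulVec_eq hx
  have hdeg : (∑ w ∈ G.neighborFinset u, G.degree w : ℝ) ≤ G.edgeFinset.card := by
    exact_mod_cast hG.sum_degree_neighborFinset_le_card_edgeFinset u
  refine le_of_mul_le_mul_right ?_ hxu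
  calc μ ^ 2 * |x u| = |μ| * (|μ| * |x u|) := by rw [← mul_assoc, ← sq, sq_abs]
    _ ≤ |μ| * ∑ w ∈ G.neighborFinset u, |x w| := by gcongr; exact hstep u
    _ = ∑ w ∈ G.neighborFinset u, |μ| * |x w| := Finset.mul_sum _ _ _
    _ ≤ ∑ w ∈ G.neighborFinset u, ∑ z ∈ G.neighborFinset w, |x u| := by
        gcongr with w
        exact (hstep w).trans (Finset.sum_le_sum fun z _ ↦ hu z)
    _ = (∑ w ∈ G.neighborFinset u, G.degree w : ℝ) * |x u| := by
        simp [Finset.sum_mul, card_neighborFinset_eq_degree]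
    _ ≤ G.edgeFinset.card * |x u| := mul_le_mul_of_nonneg_right hdeg hxu.le

end SimpleGraph

theorem nosal_general {V : Type*} [Fintype V] [DecidableEq V] (G : SimpleGraph V)
    [DecidableRel G.Adj] (lam : ℝ)
    (heig : ∃ x : V → ℝ, x ≠ 0 ∧ (G.adjMatrix ℝ).mulVec x = lam • x)
    (h : Real.sqrt (G.edgeFinset.card) < lam) :
    ¬ G.CliqueFree 3 := by
  intro hG
  obtain ⟨x, hx0, hx⟩ := heig
  have hsq := hG.sq_le_card_edgeFinset_of_adjMatrix_mulVec_eq hx0 hx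
  exact (le_abs_self lam |>.trans (Real.abs_le_sqrt hsq)).not_gt h

/-- **Nosal's Theorem.** If a graph `G` with `m` edges has spectral radius `λ₁ > √m`,
then `G` contains a triangle. -/
theorem nosal {V : Type*} [Fintype V] [DecidableEq V] (G : SimpleGraph V)
    [DecidableRel G.Adj] (lam : ℝ)
    (heig : ∃ x : V → ℝ, x ≠ 0 ∧ (G.adjMatrix ℝ).mulVec x = lam • x)
    (hmax : ∀ μ : ℝ, (∃ x : V → ℝ, x ≠ 0 ∧ (G.adjMatrix ℝ).mulVec x = μ • x) → μ ≤ lam)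
    (h : Real.sqrt (G.edgeFinset.card) < lam) :
    ¬ G.CliqueFree 3 :=
  nosal_general G lam heig h
end

section
/- If a graph G with m edges has spectral radius λ₁ ≥ √m, then G contains a triangle, unless G is a complete bipartite graph together with possibly some isolated vertices. -/
/-!
Let `x` be a `λ`-eigenvector of the adjacency matrix `A`. As `λ` is the largest eigenvalue,
`λ • 1 - A` is positive semidefinite; since `A ≥ 0` entrywise, `|x|` has Rayleigh quotient at
least `λ`, so it lies in the kernel of `λ • 1 - A` and is again a `λ`-eigenvector. Let `|x|`
attain its maximum `M > 0` at `a`. If `G` is triangle-free, `N(a)` is independent, so the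
degrees over `N(a)` count distinct edges and
`λ² M = ∑_{w ~ a} ∑_{v ~ w} |x v| ≤ M ∑_{w ~ a} deg w ≤ M m ≤ λ² M`.
Equality throughout says that every edge meets `N(a)` and that `|x| = M` at every vertex at
distance two from `a`, so the same holds for those vertices in place of `a`. Then `N(a)` and
the vertices at distance two from `a` are the sides of a complete bipartite graph containing
every edge.
-/

open Finset Matrix

namespace Matrix

variable {n : Type*} [Fintype n]

theorem posSemidef_smul_one_sub_of_eigenvalue_le [DecidableEq n] {A : Matrix n n ℝ}
    (hA : A.IsHermitian) {lam : ℝ}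
    (hmax : ∀ μ : ℝ, (∃ x : n → ℝ, x ≠ 0 ∧ A *ᵥ x = μ • x) → μ ≤ lam) :
    (lam • (1 : Matrix n n ℝ) - A).PosSemidef := by
  have hB : (lam • (1 : Matrix n n ℝ) - A).IsHermitian := (isHermitian_one.smul (.all lam)).sub hA
  refine hB.posSemidef_iff_eigenvalues_nonneg.mpr fun i => ?_
  have hv := hB.mulVec_eigenvectorBasis i
  rw [sub_mulVec, smul_mulVec, one_mulVec] at hv
  have hAv : A *ᵥ hB.eigenvectorBasis i = (lam - hB.eigenvalues i) • hB.eigenvectorBasis i := by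
    rw [sub_smul, ← hv]
    abel
  have hv0 := (WithLp.ofLp_eq_zero 2).ne.2 (hB.eigenvectorBasis.orthonormal.ne_zero i)
  simpa using hmax _ ⟨_, hv0, hAv⟩

theorem dotProduct_mulVec_le_abs {A : Matrix n n ℝ} (hA : ∀ i j, 0 ≤ A i j) (x : n → ℝ) :
    x ⬝ᵥ A *ᵥ x ≤ |x| ⬝ᵥ A *ᵥ |x| := by
  simp only [dotProduct, mulVec, mul_sum]
  refine sum_le_sum fun i _ => sum_le_sum fun j _ => ?_
  calc x i * (A i j * x j) ≤ |x i * (A i j * x j)| := le_abs_self _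
    _ = |x| i * (A i j * |x| j) := by simp [abs_mul, abs_of_nonneg (hA i j)]

theorem mulVec_abs_eq_smul_of_posSemidef [DecidableEq n] {A : Matrix n n ℝ}
    (hA : ∀ i j, 0 ≤ A i j) {lam : ℝ}
    (hpsd : (lam • (1 : Matrix n n ℝ) - A).PosSemidef) {x : n → ℝ} (hx : A *ᵥ x = lam • x) :
    A *ᵥ |x| = lam • |x| := by
  have hquad : ∀ y : n → ℝ,
      y ⬝ᵥ (lam • (1 : Matrix n n ℝ) - A) *ᵥ y = lam * (y ⬝ᵥ y) - y ⬝ᵥ A *ᵥ y := fun y => by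
    rw [sub_mulVec, smul_mulVec, one_mulVec, dotProduct_sub, dotProduct_smul, smul_eq_mul]
  have habs : |x| ⬝ᵥ |x| = x ⬝ᵥ x := sum_congr rfl fun i _ => abs_mul_abs_self (x i)
  have hle := dotProduct_mulVec_le_abs hA x
  rw [hx, dotProduct_smul, smul_eq_mul] at hle
  have hnonneg := hpsd.dotProduct_mulVec_nonneg |x|
  rw [star_trivial, hquad, habs] at hnonneg
  have hker := (hpsd.dotProduct_mulVec_zero_iff |x|).1 <| by
    rw [star_trivial, hquad, habs]
    linarith
  rw [sub_mulVec, smul_mulVec, one_mulVec, sub_eq_zero] at hker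
  exact hker.symm

end Matrix

namespace SimpleGraph

variable {V : Type*} {G : SimpleGraph V}

theorem CliqueFree.exists_bipartition (hG : G.CliqueFree 3) (P : V → Prop) {u : V} (hu : P u)
    (hclosed : ∀ a, P a → ∀ w v, G.Adj a w → G.Adj w v → P v)
    (hcover : ∀ a, P a → ∀ p q, G.Adj p q → G.Adj a p ∨ G.Adj a q) :
    ∃ A B : Set V, Disjoint A B ∧ ∀ p q, G.Adj p q ↔ (p ∈ A ∧ q ∈ B) ∨ (p ∈ B ∧ q ∈ A) := by
  classical
  have hfar_adj : ∀ w p q, G.Adj u w → G.Adj w p → G.Adj u q → G.Adj p q := fun w p q huw hwp huq =>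
    (hcover p (hclosed u hu w p huw hwp) u q huq).resolve_left fun hpu =>
      hG _ (is3Clique_triple_iff.mpr ⟨huw, hpu.symm, hwp⟩)
  refine ⟨{v | ∃ w, G.Adj u w ∧ G.Adj w v}, G.neighborSet u, ?_, fun p q => ⟨fun hpq => ?_, ?_⟩⟩
  · refine Set.disjoint_left.mpr ?_
    rintro p ⟨w, huw, hwp⟩ hup
    exact hG _ (is3Clique_triple_iff.mpr ⟨huw, hup, hwp⟩)
  · rcases hcover u hu p q hpq with hup | huq
    · exact Or.inr ⟨hup, p, hup, hpq⟩
    · exact Or.inl ⟨⟨q, huq, hpq.symm⟩, huq⟩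
  · rintro (⟨⟨w, huw, hwp⟩, huq⟩ | ⟨hup, w, huw, hwq⟩)
    · exact hfar_adj w p q huw hwp huq
    · exact (hfar_adj w q p huw hwq hup).symm

variable [Fintype V] [DecidableRel G.Adj] {lam : ℝ} {z : V → ℝ}

theorem sum_neighborFinset_of_mulVec_eq_smul (hz : G.adjMatrix ℝ *ᵥ z = lam • z) (v : V) :
    ∑ w ∈ G.neighborFinset v, z w = lam * z v := by
  simpa [adjMatrix_mulVec_apply] using congrFun hz v

theorem sum_sum_neighborFinset_of_mulVec_eq_smul (hz : G.adjMatrix ℝ *ᵥ z = lam • z) (a : V) :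
    ∑ w ∈ G.neighborFinset a, ∑ v ∈ G.neighborFinset w, z v = lam ^ 2 * z a := by
  simp_rw [sum_neighborFinset_of_mulVec_eq_smul hz, ← mul_sum,
    sum_neighborFinset_of_mulVec_eq_smul hz]
  ring

variable [DecidableEq V]

theorem IsIndepSet.pairwiseDisjoint_incidenceFinset {S : Finset V} (hS : G.IsIndepSet S) :
    (S : Set V).PairwiseDisjoint fun v => G.incidenceFinset v := fun a ha b hb hab => by
  rw [Function.onFun, ← disjoint_coe, coe_incidenceFinset, coe_incidenceFinset,
    Set.disjoint_iff_inter_eq_empty]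
  exact incidenceSet_inter_incidenceSet_of_not_adj _ (hS ha hb hab) hab

theorem IsIndepSet.sum_degree_le_card_edgeFinset {S : Finset V} (hS : G.IsIndepSet S) :
    ∑ v ∈ S, G.degree v ≤ #G.edgeFinset := by
  simp_rw [← card_incidenceFinset_eq_degree, ← card_biUnion hS.pairwiseDisjoint_incidenceFinset]
  exact card_le_card (biUnion_subset.mpr fun v _ => G.incidenceFinset_subset v)

theorem IsIndepSet.mem_or_mem_of_sum_degree_eq {S : Finset V} (hS : G.IsIndepSet S)
    (hsum : ∑ v ∈ S, G.degree v = #G.edgeFinset) {p q : V} (hpq : G.Adj p q) : p ∈ S ∨ q ∈ S := by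
  simp_rw [← card_incidenceFinset_eq_degree, ← card_biUnion hS.pairwiseDisjoint_incidenceFinset]
    at hsum
  have hcover : S.biUnion (fun v => G.incidenceFinset v) = G.edgeFinset :=
    eq_of_subset_of_card_le (biUnion_subset.mpr fun v _ => G.incidenceFinset_subset v) hsum.ge
  have hedge : s(p, q) ∈ S.biUnion fun v => G.incidenceFinset v := by
    rw [hcover]
    exact mem_edgeFinset.mpr hpq
  obtain ⟨v, hv, hpqv⟩ := mem_biUnion.mp hedge
  rcases Sym2.mem_iff.mp ((mem_incidenceFinset _ _ _).mp hpqv).2 with rfl | rfl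
  exacts [Or.inl hv, Or.inr hv]

theorem CliqueFree.adj_or_adj_and_eq_of_eq_max (hG : G.CliqueFree 3)
    (hz : G.adjMatrix ℝ *ᵥ z = lam • z) (hm : (#G.edgeFinset : ℝ) ≤ lam ^ 2) {M : ℝ} (hM : 0 < M)
    (hzM : ∀ v, z v ≤ M) {a : V} (ha : z a = M) :
    (∀ p q, G.Adj p q → G.Adj a p ∨ G.Adj a q) ∧ ∀ w v, G.Adj a w → G.Adj w v → z v = M := by
  have hindep : G.IsIndepSet (G.neighborFinset a : Set V) := by
    rw [coe_neighborFinset]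
    exact isIndepSet_neighborSet_of_triangleFree G hG a
  have hdeg := hindep.sum_degree_le_card_edgeFinset
  have hle : ∑ w ∈ G.neighborFinset a, ∑ v ∈ G.neighborFinset w, z v ≤
      ∑ w ∈ G.neighborFinset a, ∑ v ∈ G.neighborFinset w, M :=
    sum_le_sum fun w _ => sum_le_sum fun v _ => hzM v
  have hconst : ∑ w ∈ G.neighborFinset a, ∑ v ∈ G.neighborFinset w, M =
      (∑ w ∈ G.neighborFinset a, G.degree w : ℕ) * M := by
    simp [sum_mul, card_neighborFinset_eq_degree]
  have hge : (#G.edgeFinset : ℝ) * M ≤ ∑ w ∈ G.neighborFinset a, ∑ v ∈ G.neighborFinset w, z v := by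
    rw [sum_sum_neighborFinset_of_mulVec_eq_smul hz, ha]
    exact mul_le_mul_of_nonneg_right hm hM.le
  have hsum_deg : ∑ w ∈ G.neighborFinset a, G.degree w = #G.edgeFinset :=
    le_antisymm hdeg <| by
      exact_mod_cast le_of_mul_le_mul_right (hge.trans (hle.trans_eq hconst)) hM
  have hsum_eq : ∑ w ∈ G.neighborFinset a, ∑ v ∈ G.neighborFinset w, z v =
      ∑ w ∈ G.neighborFinset a, ∑ v ∈ G.neighborFinset w, M :=
    le_antisymm hle <| by
      rw [hconst]
      exact (mul_le_mul_of_nonneg_right (by exact_mod_cast hdeg) hM.le).trans hge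
  refine ⟨fun p q hpq => by simpa using hindep.mem_or_mem_of_sum_degree_eq hsum_deg hpq,
    fun w v haw hwv => ?_⟩
  have hrow := (sum_eq_sum_iff_of_le fun w _ => sum_le_sum fun v _ => hzM v).mp hsum_eq w
    ((mem_neighborFinset _ _ _).mpr haw)
  exact (sum_eq_sum_iff_of_le fun v _ => hzM v).mp hrow v ((mem_neighborFinset _ _ _).mpr hwv)

end SimpleGraph

open SimpleGraph

/-- If a graph `G` with `m` edges has spectral radius `λ₁ ≥ √m`, then `G` contains a
triangle, unless `G` is a complete bipartite graph together with possibly some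
isolated vertices. -/
theorem nikiforov_sqrt_m {V : Type*} [Fintype V] [DecidableEq V] (G : SimpleGraph V)
    [DecidableRel G.Adj] (lam : ℝ)
    (heig : ∃ x : V → ℝ, x ≠ 0 ∧ (G.adjMatrix ℝ).mulVec x = lam • x)
    (hmax : ∀ μ : ℝ, (∃ x : V → ℝ, x ≠ 0 ∧ (G.adjMatrix ℝ).mulVec x = μ • x) → μ ≤ lam)
    (h : Real.sqrt (G.edgeFinset.card) ≤ lam) :
    ¬ G.CliqueFree 3 ∨
      ∃ A B : Set V, Disjoint A B ∧
        (∀ u v : V, G.Adj u v ↔ ((u ∈ A ∧ v ∈ B) ∨ (u ∈ B ∧ v ∈ A))) := by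
  refine (em' (G.CliqueFree 3)).imp_right fun hG => ?_
  obtain ⟨x, hx0, hx⟩ := heig
  have hnonneg : ∀ i j, 0 ≤ G.adjMatrix ℝ i j := fun i j => by
    rw [adjMatrix_apply]
    positivity
  have hz := mulVec_abs_eq_smul_of_posSemidef hnonneg
    (posSemidef_smul_one_sub_of_eigenvalue_le (G.isHermitian_adjMatrix ℝ) hmax) hx
  obtain ⟨v₀, hv₀⟩ := Function.ne_iff.mp hx0
  have : Nonempty V := ⟨v₀⟩
  obtain ⟨u, hu⟩ := Finite.exists_max (|x|)
  have hM : 0 < |x| u := (abs_pos.mpr hv₀).trans_le (hu v₀)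
  have hm : (#G.edgeFinset : ℝ) ≤ lam ^ 2 := (Real.sqrt_le_iff.mp h).2
  have key := fun a (ha : |x| a = |x| u) => hG.adj_or_adj_and_eq_of_eq_max hz hm hM hu ha
  exact hG.exists_bipartition (fun a => |x| a = |x| u) rfl (fun a ha => (key a ha).2)
    fun a ha => (key a ha).1
end

section
/- If G is a connected graph with m edges and spectral radius λ₁ ≥ √m, then G contains a triangle unless G is a complete bipartite graph. -/
open Finset

/-- Key counting lemma: for a triangle-free graph with `A·y ≥ lam·y` (entrywise,
`y ≥ 0`) and `u` a coordinate where `y` is maximal, we get `lam² y_u ≤ m y_u`;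
moreover if `lam² = m` then every edge `vw` satisfies the tight equality
`A_{uv} y_w + A_{uw} y_v = y_u`. -/
lemma nikiforov_aux {V : Type*} [Fintype V] [DecidableEq V]
    (G : SimpleGraph V) [DecidableRel G.Adj] (hcf : G.CliqueFree 3)
    (lam : ℝ) (hlam : 0 ≤ lam) (y : V → ℝ) (hy0 : ∀ v, 0 ≤ y v)
    (hAy : ∀ v, lam * y v ≤ ∑ w, G.adjMatrix ℝ v w * y w)
    (u : V) (hmaxu : ∀ z, y z ≤ y u) :
    lam ^ 2 * y u ≤ (G.edgeFinset.card : ℝ) * y u ∧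
      (lam ^ 2 = (G.edgeFinset.card : ℝ) →
        ∀ v w, G.Adj v w →
          G.adjMatrix ℝ u v * y w + G.adjMatrix ℝ u w * y v = y u) := by
  classical
  set A : Matrix V V ℝ := G.adjMatrix ℝ with hA
  have hA0 : ∀ v w, (0:ℝ) ≤ A v w := by
    intro v w
    rw [hA, SimpleGraph.adjMatrix_apply]
    split <;> norm_num
  have hAsymm : ∀ v w, A v w = A w v := by
    intro v w
    simp [hA, SimpleGraph.adjMatrix_apply, SimpleGraph.adj_comm]
  set T : ℝ := ∑ v, ∑ w, A u v * (A v w * y w) with hT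
  -- lower bound
  have h1 : lam ^ 2 * y u ≤ T := by
    calc lam ^ 2 * y u = lam * (lam * y u) := by ring
      _ ≤ lam * ∑ w, A u w * y w := mul_le_mul_of_nonneg_left (hAy u) hlam
      _ = ∑ w, A u w * (lam * y w) := by
          rw [Finset.mul_sum]; exact Finset.sum_congr rfl fun w _ => by ring
      _ ≤ ∑ w, A u w * (∑ z, A w z * y z) :=
          Finset.sum_le_sum fun w _ =>
            mul_le_mul_of_nonneg_left (hAy w) (hA0 u w)
      _ = T := by rw [hT]; exact Finset.sum_congr rfl fun v _ => Finset.mul_sum _ _ _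
  -- pointwise bound
  have hpt : ∀ v w, A v w * (A u v * y w + A u w * y v) ≤ A v w * y u := by
    intro v w
    by_cases hvw : G.Adj v w
    · have hnt : ¬(G.Adj u v ∧ G.Adj u w) := by
        rintro ⟨hh1, hh2⟩
        exact hcf {u, v, w} (SimpleGraph.is3Clique_triple_iff.mpr ⟨hh1, hh2, hvw⟩)
      have e1 : A v w = 1 := by simp [hA, SimpleGraph.adjMatrix_apply, hvw]
      by_cases hh1 : G.Adj u v <;> by_cases hh2 : G.Adj u w
      · exact absurd ⟨hh1, hh2⟩ hnt
      · have : A u v = 1 := by simp [hA, hh1]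
        have h2 : A u w = 0 := by simp [hA, hh2]
        rw [e1, this, h2]
        have := hmaxu w; have := hy0 v; nlinarith
      · have : A u v = 0 := by simp [hA, hh1]
        have h2 : A u w = 1 := by simp [hA, hh2]
        rw [e1, this, h2]
        have := hmaxu v; have := hy0 w; nlinarith
      · have : A u v = 0 := by simp [hA, hh1]
        have h2 : A u w = 0 := by simp [hA, hh2]
        rw [e1, this, h2]
        have := hy0 u; have := hmaxu u; nlinarith
    · have : A v w = 0 := by simp [hA, hvw]
      rw [this]; ring_nf; rfl
  -- doubling
  have hdouble : (∑ v, ∑ w, A v w * (A u v * y w + A u w * y v)) = 2 * T := by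
    have swap : (∑ v, ∑ w, A v w * (A u w * y v))
        = ∑ v, ∑ w, A v w * (A u v * y w) := by
      rw [Finset.sum_comm]
      exact Finset.sum_congr rfl fun v _ => Finset.sum_congr rfl fun w _ => by
        rw [hAsymm w v]
    calc (∑ v, ∑ w, A v w * (A u v * y w + A u w * y v))
        = (∑ v, ∑ w, A v w * (A u v * y w)) + ∑ v, ∑ w, A v w * (A u w * y v) := by
          rw [← Finset.sum_add_distrib]
          exact Finset.sum_congr rfl fun v _ => by
            rw [← Finset.sum_add_distrib]
            exact Finset.sum_congr rfl fun w _ => by ring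
      _ = 2 * T := by
          rw [swap, hT, two_mul]
          congr 1 <;>
          · exact Finset.sum_congr rfl fun v _ => Finset.sum_congr rfl fun w _ => by ring
  -- edge count
  have hdeg : ∀ v, (∑ w, A v w) = (G.degree v : ℝ) := by
    intro v
    simp only [hA, SimpleGraph.adjMatrix_apply]
    rw [Finset.sum_boole]
    congr 1
    rw [← SimpleGraph.neighborFinset_eq_filter, SimpleGraph.degree]
  have hcount : (∑ v, ∑ w, A v w * y u) = 2 * (G.edgeFinset.card : ℝ) * y u := by
    have : (∑ v, ∑ w, A v w * y u) = (∑ v, (G.degree v : ℝ)) * y u := by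
      rw [Finset.sum_mul]
      exact Finset.sum_congr rfl fun v _ => by rw [← hdeg v, Finset.sum_mul]
    rw [this]
    have h2 : (∑ v, (G.degree v : ℝ)) = 2 * (G.edgeFinset.card : ℝ) := by
      rw_mod_cast [SimpleGraph.sum_degrees_eq_twice_card_edges]
    rw [h2]
  -- upper bound
  have hub : T ≤ (G.edgeFinset.card : ℝ) * y u := by
    have hle : (∑ v, ∑ w, A v w * (A u v * y w + A u w * y v))
        ≤ ∑ v, ∑ w, A v w * y u :=
      Finset.sum_le_sum fun v _ => Finset.sum_le_sum fun w _ => hpt v w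
    rw [hdouble, hcount] at hle
    linarith
  refine ⟨le_trans h1 hub, ?_⟩
  intro heq v w hvw
  have hTeq : T = (G.edgeFinset.card : ℝ) * y u := by
    refine le_antisymm hub ?_
    calc (G.edgeFinset.card : ℝ) * y u = lam ^ 2 * y u := by rw [heq]
      _ ≤ T := h1
  -- flatten to a product sum for equality extraction
  have hflat : (∑ p : V × V, A p.1 p.2 * (A u p.1 * y p.2 + A u p.2 * y p.1))
      = ∑ p : V × V, A p.1 p.2 * y u := by
    rw [Fintype.sum_prod_type, Fintype.sum_prod_type, hdouble, hcount, hTeq]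
    ring
  have hptone : ∀ p ∈ (Finset.univ : Finset (V × V)),
      A p.1 p.2 * (A u p.1 * y p.2 + A u p.2 * y p.1) ≤ A p.1 p.2 * y u :=
    fun p _ => hpt p.1 p.2
  have := (Finset.sum_eq_sum_iff_of_le hptone).mp hflat (v, w) (Finset.mem_univ _)
  simp only at this
  have e1 : A v w = 1 := by simp [hA, hvw]
  rw [e1, one_mul, one_mul] at this
  exact this

/-- If `G` is a connected graph with `m` edges and spectral radius `λ₁ ≥ √m`, then
`G` contains a triangle unless `G` is a complete bipartite graph. -/
theorem nikiforov_connected_sqrt_m {V : Type*} [Fintype V] [DecidableEq V]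
    (G : SimpleGraph V) [DecidableRel G.Adj] (hconn : G.Connected) (lam : ℝ)
    (heig : ∃ x : V → ℝ, x ≠ 0 ∧ (G.adjMatrix ℝ).mulVec x = lam • x)
    (hmax : ∀ μ : ℝ, (∃ x : V → ℝ, x ≠ 0 ∧ (G.adjMatrix ℝ).mulVec x = μ • x) → μ ≤ lam)
    (h : Real.sqrt (G.edgeFinset.card) ≤ lam) :
    ¬ G.CliqueFree 3 ∨
      ∃ A B : Set V, Disjoint A B ∧ (∀ v : V, v ∈ A ∨ v ∈ B) ∧
        (∀ u v : V, G.Adj u v ↔ ((u ∈ A ∧ v ∈ B) ∨ (u ∈ B ∧ v ∈ A))) := by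
  classical
  by_cases hcf : G.CliqueFree 3
  swap
  · exact Or.inl hcf
  right
  -- trivial case: no edges
  by_cases hm0 : G.edgeFinset.card = 0
  · refine ⟨Set.univ, ∅, by simp, fun v => Or.inl (Set.mem_univ v), ?_⟩
    intro a b
    have hne : ¬ G.Adj a b := by
      intro hab
      have : s(a, b) ∈ G.edgeFinset := by
        rw [SimpleGraph.mem_edgeFinset]; exact hab
      have := Finset.card_pos.mpr ⟨_, this⟩
      omega
    simp [hne]

  -- main case
  have hmpos : 0 < (G.edgeFinset.card : ℝ) := by
    exact_mod_cast Nat.pos_of_ne_zero hm0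
  have hlam : 0 < lam := lt_of_lt_of_le (Real.sqrt_pos.mpr hmpos) h
  have hm_le : (G.edgeFinset.card : ℝ) ≤ lam ^ 2 := by
    nlinarith [Real.sq_sqrt hmpos.le, Real.sqrt_nonneg ((G.edgeFinset.card : ℝ))]
  obtain ⟨x, hx0, hxeig⟩ := heig
  set y : V → ℝ := fun v => |x v| with hy
  have hy0 : ∀ v, 0 ≤ y v := fun v => abs_nonneg _
  have hA0 : ∀ v w, (0:ℝ) ≤ G.adjMatrix ℝ v w := by
    intro v w
    rw [SimpleGraph.adjMatrix_apply]
    split <;> norm_num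
  have hAy : ∀ v, lam * y v ≤ ∑ w, G.adjMatrix ℝ v w * y w := by
    intro v
    have h1 : (∑ w, G.adjMatrix ℝ v w * x w) = lam * x v := by
      have h2 := congrFun hxeig v
      simpa [Matrix.mulVec, dotProduct] using h2
    calc lam * y v = |lam * x v| := by
          rw [abs_mul, abs_of_pos hlam]
      _ = |∑ w, G.adjMatrix ℝ v w * x w| := by rw [h1]
      _ ≤ ∑ w, |G.adjMatrix ℝ v w * x w| := Finset.abs_sum_le_sum_abs _ _
      _ = ∑ w, G.adjMatrix ℝ v w * y w := Finset.sum_congr rfl fun w _ => by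
          rw [abs_mul, abs_of_nonneg (hA0 v w)]
  haveI : Nonempty V := hconn.nonempty
  obtain ⟨u, -, hmaxu'⟩ := Finset.exists_max_image Finset.univ y Finset.univ_nonempty
  have hmaxu : ∀ z, y z ≤ y u := fun z => hmaxu' z (Finset.mem_univ z)
  have hupos : 0 < y u := by
    obtain ⟨v, hv⟩ := Function.ne_iff.mp hx0
    exact lt_of_lt_of_le (abs_pos.mpr hv) (hmaxu v)
  obtain ⟨hchain, hkeyfn⟩ := nikiforov_aux G hcf lam hlam.le y hy0 hAy u hmaxu
  have hmeq : lam ^ 2 = (G.edgeFinset.card : ℝ) := by nlinarith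
  have hkey := hkeyfn hmeq
  have keyAt : ∀ a : V, y a = y u → ∀ v w, G.Adj v w →
      G.adjMatrix ℝ a v * y w + G.adjMatrix ℝ a w * y v = y a :=
    fun a ha =>
      (nikiforov_aux G hcf lam hlam.le y hy0 hAy a (fun z => ha ▸ hmaxu z)).2 hmeq
  have hedgeOr : ∀ v w, G.Adj v w → G.Adj u v ∨ G.Adj u w := by
    intro v w hvw
    by_contra hc
    push_neg at hc
    have h1 := hkey v w hvw
    rw [SimpleGraph.adjMatrix_apply, SimpleGraph.adjMatrix_apply,
      if_neg hc.1, if_neg hc.2] at h1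
    simp at h1
    linarith [h1]
  have hnotboth : ∀ v w, G.Adj v w → ¬(G.Adj u v ∧ G.Adj u w) := by
    rintro v w hvw ⟨p, q⟩
    exact hcf {u, v, w} (SimpleGraph.is3Clique_triple_iff.mpr ⟨p, q, hvw⟩)
  -- the cross adjacency lemma
  have cross : ∀ a b : V, ¬ G.Adj u a → G.Adj u b → G.Adj a b := by
    intro a b hna hb
    by_cases hau : a = u
    · subst hau; exact hb
    · obtain ⟨z, hz⟩ : ∃ z, G.Adj a z := by
        obtain ⟨W⟩ := hconn.preconnected a u
        cases W with
        | nil => exact absurd rfl hau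
        | cons hadj _ => exact ⟨_, hadj⟩
      have huz : G.Adj u z := by
        rcases hedgeOr a z hz with h' | h'
        · exact absurd h' hna
        · exact h'
      have hya : y a = y u := by
        have h1 := hkey a z hz
        rw [SimpleGraph.adjMatrix_apply, SimpleGraph.adjMatrix_apply,
          if_neg hna, if_pos huz] at h1
        simp at h1
        linarith [h1]
      by_contra hnab
      have h2 := keyAt a hya u b hb
      have hnau : ¬ G.Adj a u := fun q => hna q.symm
      rw [SimpleGraph.adjMatrix_apply, SimpleGraph.adjMatrix_apply,
        if_neg hnau, if_neg hnab] at h2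
      simp at h2
      rw [hya] at h2
      linarith [h2]
  refine ⟨{z | ¬ G.Adj u z}, {z | G.Adj u z},
    Set.disjoint_left.mpr (fun z hz hz2 => hz hz2), ?_, ?_⟩
  · intro v
    by_cases hv : G.Adj u v
    · exact Or.inr hv
    · exact Or.inl hv
  · intro a b
    constructor
    · intro hab
      rcases hedgeOr a b hab with hone | hone
      · exact Or.inr ⟨hone, fun hb => hnotboth a b hab ⟨hone, hb⟩⟩
      · exact Or.inl ⟨fun ha => hnotboth a b hab ⟨ha, hone⟩, hone⟩
    · rintro (⟨ha, hb⟩ | ⟨ha, hb⟩)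
      · exact cross a b ha hb
      · exact (cross b a hb ha).symm
end

section
/- For any graph G, the spectral radius satisfies λ₁ ≤ √(max over vertices v of the sum of the degrees of the neighbors of v). -/
/-- The spectral radius of a graph is at most the square root of the maximum over
vertices `v` of the sum of the degrees of the neighbors of `v`. -/
theorem spectralRadius_le_sqrt_max_sum_degrees {V : Type*} [Fintype V] [DecidableEq V]
    [Nonempty V] (G : SimpleGraph V) [DecidableRel G.Adj] (lam : ℝ)
    (heig : ∃ x : V → ℝ, x ≠ 0 ∧ (G.adjMatrix ℝ).mulVec x = lam • x)
    (hmax : ∀ μ : ℝ, (∃ x : V → ℝ, x ≠ 0 ∧ (G.adjMatrix ℝ).mulVec x = μ • x) → μ ≤ lam) :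
    lam ≤ Real.sqrt
      (Finset.univ.sup' Finset.univ_nonempty
        (fun v => ∑ u ∈ G.neighborFinset v, G.degree u) : ℕ) := by
  obtain ⟨x, hx0, hx⟩ := heig
  set M : ℕ := Finset.univ.sup' Finset.univ_nonempty
      (fun v => ∑ u ∈ G.neighborFinset v, G.degree u) with hM
  obtain ⟨v, -, hv⟩ := Finset.exists_max_image Finset.univ (fun v => |x v|)
    ⟨Classical.arbitrary V, Finset.mem_univ _⟩
  have hvpos : 0 < |x v| := by
    rcases lt_or_eq_of_le (abs_nonneg (x v)) with h | h
    · exact h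
    · exfalso; apply hx0; funext u
      have h2 : |x u| ≤ 0 := h ▸ hv u (Finset.mem_univ u)
      simpa using le_antisymm h2 (abs_nonneg _)
  have key : ∀ u, ∑ w ∈ G.neighborFinset u, x w = lam * x u := by
    intro u
    have := congrFun hx u
    simpa [SimpleGraph.adjMatrix_mulVec_apply] using this
  have keycalc : lam ^ 2 * x v = ∑ u ∈ G.neighborFinset v, ∑ w ∈ G.neighborFinset u, x w := by
    calc lam ^ 2 * x v = lam * (lam * x v) := by ring
      _ = lam * ∑ u ∈ G.neighborFinset v, x u := by rw [key v]
      _ = ∑ u ∈ G.neighborFinset v, lam * x u := Finset.mul_sum _ _ _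
      _ = ∑ u ∈ G.neighborFinset v, ∑ w ∈ G.neighborFinset u, x w := by
          simp only [key]
  have h1 : lam ^ 2 * |x v| ≤ (M : ℝ) * |x v| := by
    calc lam ^ 2 * |x v| = |lam ^ 2 * x v| := by
          rw [abs_mul, abs_of_nonneg (sq_nonneg lam)]
      _ = |∑ u ∈ G.neighborFinset v, ∑ w ∈ G.neighborFinset u, x w| := by rw [keycalc]
      _ ≤ ∑ u ∈ G.neighborFinset v, |∑ w ∈ G.neighborFinset u, x w| :=
          Finset.abs_sum_le_sum_abs _ _
      _ ≤ ∑ u ∈ G.neighborFinset v, ∑ w ∈ G.neighborFinset u, |x w| :=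
          Finset.sum_le_sum fun u _ => Finset.abs_sum_le_sum_abs _ _
      _ ≤ ∑ u ∈ G.neighborFinset v, ∑ w ∈ G.neighborFinset u, |x v| :=
          Finset.sum_le_sum fun u _ => Finset.sum_le_sum fun w _ => hv w (Finset.mem_univ w)
      _ = (((∑ u ∈ G.neighborFinset v, G.degree u : ℕ) : ℝ)) * |x v| := by
          simp [Finset.sum_const, SimpleGraph.card_neighborFinset_eq_degree,
            Finset.sum_mul, Nat.cast_sum]
      _ ≤ (M : ℝ) * |x v| := by
          apply mul_le_mul_of_nonneg_right _ (abs_nonneg _)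
          exact_mod_cast Nat.cast_le.mpr
            (Finset.le_sup' (fun v => ∑ u ∈ G.neighborFinset v, G.degree u) (Finset.mem_univ v))
  have h2 : lam ^ 2 ≤ (M : ℝ) := le_of_mul_le_mul_right h1 hvpos
  calc lam ≤ |lam| := le_abs_self lam
    _ = Real.sqrt (lam ^ 2) := (Real.sqrt_sq_eq_abs lam).symm
    _ ≤ Real.sqrt M := Real.sqrt_le_sqrt h2
end

section
/- For any graph G on n vertices with m edges, the spectral radius satisfies λ₁ ≤ −1/2 + √(2m + 1/4) (Stanley's inequality). -/
/-- **Stanley's inequality.** The spectral radius of a graph with `m` edges satisfies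
`λ₁ ≤ -1/2 + √(2m + 1/4)`. -/
theorem stanley {V : Type*} [Fintype V] [DecidableEq V] (G : SimpleGraph V)
    [DecidableRel G.Adj] (lam : ℝ)
    (heig : ∃ x : V → ℝ, x ≠ 0 ∧ (G.adjMatrix ℝ).mulVec x = lam • x)
    (hmax : ∀ μ : ℝ, (∃ x : V → ℝ, x ≠ 0 ∧ (G.adjMatrix ℝ).mulVec x = μ • x) → μ ≤ lam) :
    lam ≤ -1/2 + Real.sqrt (2 * (G.edgeFinset.card : ℝ) + 1/4) := by
  set M : ℝ := (G.edgeFinset.card : ℝ) with hM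
  have hM0 : (0:ℝ) ≤ M := by positivity
  have hs0 : (0:ℝ) ≤ Real.sqrt (2 * M + 1/4) := Real.sqrt_nonneg _
  have hs2 : (Real.sqrt (2 * M + 1/4)) ^ 2 = 2 * M + 1/4 := by
    rw [Real.sq_sqrt]; positivity
  rcases le_or_gt lam 0 with hlam | hlam
  · nlinarith [hs0, hs2]
  -- main case : lam > 0
  have key : lam ^ 2 + lam ≤ 2 * M := by
    obtain ⟨x, hx0, hx⟩ := heig
    set y : V → ℝ := fun v => |x v| with hy
    have hyn : ∀ v, 0 ≤ y v := fun v => abs_nonneg _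
    -- a vertex where |x| is maximal
    obtain ⟨v0, hv0⟩ : ∃ v, x v ≠ 0 := Function.ne_iff.mp hx0
    have hne : (Finset.univ : Finset V).Nonempty := ⟨v0, Finset.mem_univ _⟩
    obtain ⟨i, -, hi⟩ := Finset.exists_max_image Finset.univ y hne
    have hile : ∀ j, y j ≤ y i := fun j => hi j (Finset.mem_univ j)
    have hyi : 0 < y i := lt_of_lt_of_le (abs_pos.mpr hv0) (hile v0)
    -- key eigen-inequality
    have hkey : ∀ j, lam * y j ≤ ∑ u ∈ G.neighborFinset j, y u := by
      intro j
      have h1 : (G.adjMatrix ℝ).mulVec x j = lam * x j := by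
        rw [hx]; simp
      have h2 : (∑ u ∈ G.neighborFinset j, x u) = lam * x j := by
        rw [← h1]; simp
      calc lam * y j = |lam * x j| := by
            rw [abs_mul, abs_of_pos hlam]
        _ = |∑ u ∈ G.neighborFinset j, x u| := by rw [h2]
        _ ≤ ∑ u ∈ G.neighborFinset j, |x u| := Finset.abs_sum_le_sum_abs _ _
        _ = ∑ u ∈ G.neighborFinset j, y u := rfl
    have hdegbd : ∀ j, (∑ u ∈ G.neighborFinset j, y u) ≤ (G.degree j : ℝ) * y i := by
      intro j
      calc (∑ u ∈ G.neighborFinset j, y u) ≤ ∑ u ∈ G.neighborFinset j, y i :=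
            Finset.sum_le_sum (fun u _ => hile u)
        _ = (G.degree j : ℝ) * y i := by
            rw [Finset.sum_const, SimpleGraph.card_neighborFinset_eq_degree]
            simp [mul_comm]
    -- Step A : lam ≤ deg i
    have hA : lam ≤ (G.degree i : ℝ) := by
      have := (hkey i).trans (hdegbd i)
      exact le_of_mul_le_mul_right (by linarith) hyi
    -- degree sum bound : ∑_{j ∈ N(i)} deg j ≤ 2m - deg i
    have hdsum : (∑ j ∈ G.neighborFinset i, (G.degree j : ℝ)) ≤ 2 * M - (G.degree i : ℝ) := by
      have hsub : G.neighborFinset i ⊆ Finset.univ.erase i := by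
        intro j hj
        rw [Finset.mem_erase]
        exact ⟨(G.ne_of_adj ((G.mem_neighborFinset i j).mp hj)).symm, Finset.mem_univ _⟩
      have h1 : (∑ j ∈ G.neighborFinset i, G.degree j) ≤ ∑ j ∈ Finset.univ.erase i, G.degree j :=
        Finset.sum_le_sum_of_subset hsub
      have h2 : (∑ j ∈ Finset.univ.erase i, G.degree j) + G.degree i = ∑ j, G.degree j :=
        Finset.sum_erase_add _ _ (Finset.mem_univ i)
      have h3 : (∑ j, G.degree j) = 2 * G.edgeFinset.card :=
        G.sum_degrees_eq_twice_card_edges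
      have : (∑ j ∈ G.neighborFinset i, G.degree j) + G.degree i ≤ 2 * G.edgeFinset.card := by
        omega
      have := (Nat.cast_le (α := ℝ)).mpr this
      push_cast at this
      push_cast
      linarith
    -- Step B : lam^2 ≤ 2M - deg i
    have hB : lam ^ 2 ≤ 2 * M - (G.degree i : ℝ) := by
      have c1 : lam ^ 2 * y i ≤ lam * ∑ j ∈ G.neighborFinset i, y j := by
        have := hkey i
        calc lam ^ 2 * y i = lam * (lam * y i) := by ring
          _ ≤ lam * ∑ j ∈ G.neighborFinset i, y j :=
            mul_le_mul_of_nonneg_left (hkey i) hlam.le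
      have c2 : lam * (∑ j ∈ G.neighborFinset i, y j)
          ≤ ∑ j ∈ G.neighborFinset i, ∑ u ∈ G.neighborFinset j, y u := by
        rw [Finset.mul_sum]
        exact Finset.sum_le_sum (fun j _ => hkey j)
      have c3 : (∑ j ∈ G.neighborFinset i, ∑ u ∈ G.neighborFinset j, y u)
          ≤ ∑ j ∈ G.neighborFinset i, (G.degree j : ℝ) * y i :=
        Finset.sum_le_sum (fun j _ => hdegbd j)
      have c4 : (∑ j ∈ G.neighborFinset i, (G.degree j : ℝ) * y i)
          ≤ (2 * M - (G.degree i : ℝ)) * y i := by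
        rw [← Finset.sum_mul]
        exact mul_le_mul_of_nonneg_right hdsum hyi.le
      have : lam ^ 2 * y i ≤ (2 * M - (G.degree i : ℝ)) * y i := by linarith
      exact le_of_mul_le_mul_right this hyi
    linarith
  nlinarith [hs0, hs2]
end

section
/- If G is a graph on n vertices with minimum degree δ > n/2, then G contains a cycle of every length l with 3 ≤ l ≤ n (G is pancyclic). -/
/-!
Dirac's argument gives a Hamiltonian cycle `v₀ v₁ … v_{n-1}`: the ends of a longest path have all
their neighbours on it, so `δ > n/2` forces two chords from the ends that close the path into a
cycle through its vertices, and a vertex off that cycle would have a neighbour on it and extend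
the path.

For `3 ≤ l < n` and `2 ≤ i, j ≤ n - 1` with `j ≡ i + l - 3 (mod n - 2)`, the chords `v₁vᵢ` and
`v₀vⱼ` close a cycle of length `l`. As `i ↦ j` permutes `{2, …, n - 1}`, a graph without
`l`-cycles has `deg v₀ + deg v₁ ≤ n`, contradicting `δ > n/2`.
-/

open Finset

theorem Finset.card_filter_add_card_filter_le_of_injOn {α : Type*} {s : Finset α}
    {p q : α → Prop} [DecidablePred p] [DecidablePred q] (ψ : α → α) (hψ : Set.InjOn ψ s)
    (hmaps : ∀ a ∈ s, ψ a ∈ s) (h : ∀ a ∈ s, q a → ¬ p (ψ a)) :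
    #{a ∈ s | p a} + #{a ∈ s | q a} ≤ #s := by
  have hq : #{a ∈ s | q a} ≤ #{a ∈ s | ¬ p a} :=
    card_le_card_of_injOn ψ (fun a ha => by
      rw [coe_filter] at ha
      exact mem_filter.2 ⟨hmaps a ha.1, h a ha.1 ha.2⟩) (hψ.mono (filter_subset _ _))
  have := card_filter_add_card_filter_not (s := s) (fun a => p a)
  omega

namespace SimpleGraph

variable {V : Type*}

/-- `f 0, f 1, …, f k` is a path of `G`; the values of `f` beyond `k` play no role. -/
structure IsPathSeq (G : SimpleGraph V) (f : ℕ → V) (k : ℕ) : Prop where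
  adj : ∀ t < k, G.Adj (f t) (f (t + 1))
  injOn : ∀ s ≤ k, ∀ t ≤ k, f s = f t → s = t

/-- The path `f 0, …, f k` closed by the edge `f k f 0`: a cycle of length `k + 1`. -/
structure IsCycleSeq (G : SimpleGraph V) (f : ℕ → V) (k : ℕ) : Prop extends G.IsPathSeq f k where
  close : G.Adj (f k) (f 0)

def seqAppend (f : ℕ → V) (a : ℕ) (g : ℕ → V) (t : ℕ) : V :=
  if t ≤ a then f t else g (t - (a + 1))

variable {G : SimpleGraph V} {f g : ℕ → V} {a b i j k m t : ℕ} {w : V}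

theorem seqAppend_of_le (ht : t ≤ a) : seqAppend f a g t = f t := if_pos ht

theorem seqAppend_of_lt (ht : a < t) : seqAppend f a g t = g (t - (a + 1)) :=
  if_neg (Nat.not_le.2 ht)

namespace IsPathSeq

theorem const (G : SimpleGraph V) (x : V) : G.IsPathSeq (fun _ => x) 0 :=
  ⟨fun _ ht => absurd ht (Nat.not_lt_zero _), fun _ hs _ ht _ => by omega⟩

theorem take (h : G.IsPathSeq f k) (hm : m ≤ k) : G.IsPathSeq f m :=
  ⟨fun t ht => h.adj t (by omega), fun s hs t ht => h.injOn s (by omega) t (by omega)⟩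

theorem segment (h : G.IsPathSeq f k) (hij : i ≤ j) (hj : j ≤ k) :
    G.IsPathSeq (fun t => f (i + t)) (j - i) where
  adj t ht := h.adj (i + t) (by omega)
  injOn s hs t ht hst := by have := h.injOn _ (by omega) _ (by omega) hst; omega

theorem reverseSegment (h : G.IsPathSeq f k) (hij : i ≤ j) (hj : j ≤ k) :
    G.IsPathSeq (fun t => f (j - t)) (j - i) where
  adj t ht := by
    have := h.adj (j - (t + 1)) (by omega)
    rw [show j - (t + 1) + 1 = j - t by omega] at this
    exact this.symm
  injOn s hs t ht hst := by have := h.injOn _ (by omega) _ (by omega) hst; omega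

theorem append (hf : G.IsPathSeq f a) (hg : G.IsPathSeq g b) (hfg : G.Adj (f a) (g 0))
    (hdisj : ∀ s ≤ a, ∀ t ≤ b, f s ≠ g t) : G.IsPathSeq (seqAppend f a g) (a + b + 1) where
  adj t ht := by
    unfold seqAppend
    split_ifs with h1 h2 h2
    · exact hf.adj t (by omega)
    · rw [show t = a by omega, show a + 1 - (a + 1) = 0 by omega]
      exact hfg
    · omega
    · rw [show t + 1 - (a + 1) = t - (a + 1) + 1 by omega]
      exact hg.adj _ (by omega)
  injOn s hs t ht hst := by
    unfold seqAppend at hst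
    split_ifs at hst with h1 h2 h2
    · exact hf.injOn s h1 t h2 hst
    · exact absurd hst (hdisj s h1 _ (by omega))
    · exact absurd hst.symm (hdisj t h2 _ (by omega))
    · have := hg.injOn _ (by omega) _ (by omega) hst
      omega

theorem cons (h : G.IsPathSeq f k) (hw : G.Adj w (f 0)) (hfw : ∀ t ≤ k, f t ≠ w) :
    G.IsPathSeq (seqAppend (fun _ => w) 0 f) (k + 1) := by
  simpa using (const G w).append h hw fun _ _ t ht => (hfw t ht).symm

theorem exists_isPath (h : G.IsPathSeq f k) :
    ∃ p : G.Walk (f 0) (f k), p.IsPath ∧ p.length = k ∧ ∀ x ∈ p.support, ∃ t ≤ k, f t = x := by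
  induction k generalizing f with
  | zero => exact ⟨.nil, by simp, rfl, by simp⟩
  | succ k ih =>
    have htail : G.IsPathSeq (fun t => f (t + 1)) k :=
      ⟨fun t ht => h.adj (t + 1) (by omega),
        fun s hs t ht hst => by have := h.injOn _ (by omega) _ (by omega) hst; omega⟩
    obtain ⟨p, hp, hlen, hsupp⟩ := ih htail
    refine ⟨.cons (h.adj 0 (by omega)) p, ?_, by simp [hlen], ?_⟩
    · refine (Walk.cons_isPath_iff _ _).2 ⟨hp, fun hmem => ?_⟩
      obtain ⟨t, ht, hft⟩ := hsupp _ hmem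
      have := h.injOn _ (by omega) 0 (by omega) hft
      omega
    · intro x hx
      rcases List.mem_cons.1 (Walk.support_cons _ _ ▸ hx) with rfl | hx
      · exact ⟨0, by omega, rfl⟩
      · obtain ⟨t, ht, rfl⟩ := hsupp x hx
        exact ⟨t + 1, by omega, rfl⟩

theorem card_image [DecidableEq V] (h : G.IsPathSeq f k) : #((range (k + 1)).image f) = k + 1 := by
  rw [card_image_of_injOn, card_range]
  intro s hs t ht hst
  exact h.injOn s (Nat.lt_succ_iff.1 (mem_range.1 hs)) t (Nat.lt_succ_iff.1 (mem_range.1 ht)) hst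

theorem lt_card [Fintype V] (h : G.IsPathSeq f k) : k < Fintype.card V := by
  classical
  have := card_le_univ ((range (k + 1)).image f)
  rw [h.card_image] at this
  omega

theorem exists_eq_of_card_eq [Fintype V] (h : G.IsPathSeq f k) (hk : Fintype.card V = k + 1)
    (w : V) : ∃ t ∈ range (k + 1), f t = w := by
  classical
  have himage : (range (k + 1)).image f = univ := eq_univ_of_card _ (h.card_image.trans hk.symm)
  exact mem_image.1 (himage ▸ mem_univ w)

theorem isCycleSeq_of_endpoint_chords (h : G.IsPathSeq f k) (hj : j < k)
    (h0 : G.Adj (f 0) (f (j + 1))) (hk : G.Adj (f j) (f k)) :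
    G.IsCycleSeq (seqAppend f j fun t => f (k - t)) k := by
  have hpath := (h.take hj.le).append (h.reverseSegment hj le_rfl) hk fun s hs t ht hst => by
    have := h.injOn _ (by omega) _ (by omega) hst
    omega
  rw [show j + (k - (j + 1)) + 1 = k by omega] at hpath
  refine ⟨hpath, ?_⟩
  simpa [seqAppend, show ¬ k ≤ j by omega, show k - (k - (j + 1)) = j + 1 by omega] using h0.symm

end IsPathSeq

theorem IsCycleSeq.exists_isCycle (h : G.IsCycleSeq f k) (hk : 2 ≤ k) :
    ∃ (x : V) (c : G.Walk x x), c.IsCycle ∧ c.length = k + 1 := by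
  obtain ⟨p, hp, hlen, -⟩ := h.exists_isPath
  refine ⟨f k, .cons h.close p, (Walk.cons_isCycle_iff p h.close).2 ⟨hp, fun he => ?_⟩,
    by simp [hlen]⟩
  have := hp.length_eq_one_of_mem_edges (Sym2.eq_swap ▸ he)
  omega

theorem IsCycleSeq.isPathSeq_rotate (h : G.IsCycleSeq f k) (hm : m ≤ k) :
    G.IsPathSeq (seqAppend (fun t => f (m + t)) (k - m) f) k where
  adj t ht := by
    unfold seqAppend
    split_ifs with h1 h2 h2
    · exact h.adj (m + t) (by omega)
    · simpa only [show m + t = k by omega, show t + 1 - (k - m + 1) = 0 by omega] using h.close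
    · omega
    · rw [show t + 1 - (k - m + 1) = t - (k - m + 1) + 1 by omega]
      exact h.adj _ (by omega)
  injOn s hs t ht hst := by
    unfold seqAppend at hst
    split_ifs at hst <;> have := h.injOn _ (by omega) _ (by omega) hst <;> omega

/-- The cycle `f 1, f 0, f j, f (j - 1), …, f i`. -/
theorem IsPathSeq.exists_isCycle_of_nested_chords (h : G.IsPathSeq f k) (hi : 2 ≤ i)
    (hij : i ≤ j) (hj : j ≤ k) (h0 : G.Adj (f 0) (f j)) (h1 : G.Adj (f 1) (f i)) :
    ∃ (x : V) (c : G.Walk x x), c.IsCycle ∧ c.length = j - i + 3 := by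
  have hpath := (h.reverseSegment (i := 0) (j := 1) (by omega) (by omega)).append
    (h.reverseSegment hij hj) h0 fun s hs t ht hst => by
      have := h.injOn _ (by omega) _ (by omega) hst
      omega
  rw [show 1 - 0 + (j - i) + 1 = j - i + 2 by omega] at hpath
  have hcyc : G.IsCycleSeq _ (j - i + 2) := ⟨hpath, by
    rw [seqAppend_of_lt (by omega), seqAppend_of_le (by omega),
      show j - (j - i + 2 - (1 - 0 + 1)) = i by omega]
    exact h1.symm⟩
  exact hcyc.exists_isCycle (by omega)

/-- The cycle `f 0, f j, f (j - 1), …, f 1, f i, f (i + 1), …, f k`. -/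
theorem IsCycleSeq.exists_isCycle_of_crossing_chords (h : G.IsCycleSeq f k) (hj : 1 ≤ j)
    (hji : j < i) (hi : i ≤ k) (h0 : G.Adj (f 0) (f j)) (h1 : G.Adj (f 1) (f i)) :
    ∃ (x : V) (c : G.Walk x x), c.IsCycle ∧ c.length = k + j - i + 2 := by
  have hhead := (h.reverseSegment hj (by omega)).cons h0 fun t ht hft => by
    have := h.injOn _ (by omega) 0 (by omega) hft
    omega
  have hpath := hhead.append (h.segment hi le_rfl)
    (by
      rw [seqAppend_of_lt (by omega), show j - (j - 1 + 1 - (0 + 1)) = 1 by omega]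
      exact h1)
    fun s hs t ht hst => by
      unfold seqAppend at hst
      split_ifs at hst <;> have := h.injOn _ (by omega) _ (by omega) hst <;> omega
  rw [show j - 1 + 1 + (k - i) + 1 = k + j - i + 1 by omega] at hpath
  have hcyc : G.IsCycleSeq _ (k + j - i + 1) := ⟨hpath, by
    rw [seqAppend_of_lt (by omega), seqAppend_of_le (by omega), seqAppend_of_le (by omega),
      show i + (k + j - i + 1 - (j - 1 + 1 + 1)) = k by omega]
    exact h.close⟩
  exact hcyc.exists_isCycle (by omega)

variable [Fintype V]

theorem degree_le_card_filter [DecidableRel G.Adj] {x : V} {s : Finset ℕ}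
    (h : ∀ w, G.Adj x w → ∃ j ∈ s, f j = w) : G.degree x ≤ #{j ∈ s | G.Adj x (f j)} := by
  classical
  rw [← card_neighborFinset_eq_degree]
  refine (card_le_card fun w hw => ?_).trans (card_image_le (f := f))
  rw [mem_neighborFinset] at hw
  obtain ⟨j, hj, rfl⟩ := h w hw
  exact mem_image_of_mem f (mem_filter.2 ⟨hj, hw⟩)

theorem exists_adj_mem_of_card_lt [DecidableRel G.Adj] {s : Finset V} (hw : w ∉ s)
    (h : Fintype.card V < #s + 1 + G.degree w) : ∃ x ∈ s, G.Adj w x := by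
  classical
  by_contra! hno
  have hsub : G.neighborFinset w ⊆ (insert w s)ᶜ := fun x hx => by
    rw [mem_neighborFinset] at hx
    simp only [mem_compl, mem_insert, not_or]
    exact ⟨(G.ne_of_adj hx).symm, fun hxs => hno x hxs hx⟩
  have := card_le_card hsub
  have := card_le_univ (insert w s)
  rw [card_compl, card_insert_of_notMem hw, card_neighborFinset_eq_degree] at *
  omega

theorem exists_isPathSeq_maximal [Nonempty V] (G : SimpleGraph V) :
    ∃ f k, G.IsPathSeq f k ∧ ∀ g, ¬ G.IsPathSeq g (k + 1) := by
  by_contra! h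
  have hall : ∀ k, ∃ f, G.IsPathSeq f k := by
    intro k
    induction k with
    | zero => exact ⟨_, .const G (Classical.arbitrary V)⟩
    | succ k ih =>
      obtain ⟨f, hf⟩ := ih
      exact h f k hf
  obtain ⟨f, hf⟩ := hall (Fintype.card V)
  exact hf.lt_card.false

variable [DecidableRel G.Adj]

namespace IsPathSeq

theorem degree_head_le_of_maximal (h : G.IsPathSeq f k)
    (hmax : ∀ g, ¬ G.IsPathSeq g (k + 1)) :
    G.degree (f 0) ≤ #{j ∈ range k | G.Adj (f 0) (f (j + 1))} := by
  refine degree_le_card_filter fun w hw => ?_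
  by_contra! hout
  refine hmax _ (h.cons hw.symm fun t ht hft => ?_)
  rcases t with _ | t
  · exact G.ne_of_adj hw hft
  · exact hout t (mem_range.2 (by omega)) hft

theorem degree_last_le_of_maximal (h : G.IsPathSeq f k)
    (hmax : ∀ g, ¬ G.IsPathSeq g (k + 1)) :
    G.degree (f k) ≤ #{j ∈ range k | G.Adj (f k) (f j)} := by
  refine degree_le_card_filter fun w hw => ?_
  by_contra! hout
  have hfw : ∀ t ≤ k, f t ≠ w := fun t ht hft => by
    rcases (show t = k ∨ t < k by omega) with rfl | htk
    · exact G.ne_of_adj hw hft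
    · exact hout t (mem_range.2 htk) hft
  exact hmax _ (by simpa using h.append (.const G w) hw fun t ht _ _ => hfw t ht)

theorem exists_isCycleSeq_of_maximal (h : G.IsPathSeq f k) (hmax : ∀ g, ¬ G.IsPathSeq g (k + 1))
    (hdeg : ∀ x, Fintype.card V < 2 * G.degree x) : ∃ c, G.IsCycleSeq c k := by
  obtain ⟨j, hj, h0, hk⟩ : ∃ j < k, G.Adj (f 0) (f (j + 1)) ∧ G.Adj (f j) (f k) := by
    by_contra! hno
    have hsum := card_filter_add_card_filter_le_of_injOn (s := range k)
      (p := fun j => G.Adj (f 0) (f (j + 1))) (q := fun j => G.Adj (f k) (f j)) id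
      (Set.injOn_id _) (fun _ ha => ha) fun j hj hjk h0 => hno j (mem_range.1 hj) h0 hjk.symm
    have := h.degree_head_le_of_maximal hmax
    have := h.degree_last_le_of_maximal hmax
    have := hdeg (f 0)
    have := hdeg (f k)
    have := h.lt_card
    simp only [card_range] at hsum
    omega
  exact ⟨_, h.isCycleSeq_of_endpoint_chords hj h0 hk⟩

end IsPathSeq

theorem IsCycleSeq.card_eq_of_maximal (h : G.IsCycleSeq f k)
    (hmax : ∀ g, ¬ G.IsPathSeq g (k + 1)) (hdeg : ∀ x, Fintype.card V < k + 2 + G.degree x) :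
    Fintype.card V = k + 1 := by
  classical
  set s := (range (k + 1)).image f
  have hs : #s = k + 1 := h.card_image
  by_contra hne
  obtain ⟨w, -, hw⟩ : ∃ w ∈ univ, w ∉ s := exists_mem_notMem_of_card_lt_card (by
    rw [card_univ, hs]
    have := h.lt_card
    omega)
  obtain ⟨x, hx, hwx⟩ := exists_adj_mem_of_card_lt hw (by rw [hs]; exact hdeg w)
  obtain ⟨m, hm, rfl⟩ := mem_image.1 hx
  have hm : m ≤ k := Nat.lt_succ_iff.1 (mem_range.1 hm)
  refine hmax _ ((h.isPathSeq_rotate hm).cons (by simpa [seqAppend] using hwx) fun t ht hft => hw ?_)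
  rw [← hft]
  unfold seqAppend
  split_ifs <;> exact mem_image_of_mem _ (mem_range.2 (by omega))

theorem exists_isCycleSeq_of_forall_card_lt_two_mul_degree [Nonempty V]
    (hdeg : ∀ x, Fintype.card V < 2 * G.degree x) : ∃ c, G.IsCycleSeq c (Fintype.card V - 1) := by
  obtain ⟨f, k, hf, hmax⟩ := G.exists_isPathSeq_maximal
  obtain ⟨c, hc⟩ := hf.exists_isCycleSeq_of_maximal hmax hdeg
  have hk : G.degree (f 0) ≤ k :=
    (hf.degree_head_le_of_maximal hmax).trans ((card_filter_le _ _).trans (card_range k).le)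
  have hcard := hc.card_eq_of_maximal hmax fun x => by
    have := hdeg x
    have := hdeg (f 0)
    omega
  exact ⟨c, by rwa [hcard, Nat.add_sub_cancel]⟩

theorem IsCycleSeq.degree_add_degree_le (h : G.IsCycleSeq f k) (hcard : Fintype.card V = k + 1)
    {l : ℕ} (hl : 3 ≤ l) (hlk : l ≤ k)
    (hno : ¬ ∃ (x : V) (c : G.Walk x x), c.IsCycle ∧ c.length = l) :
    G.degree (f 0) + G.degree (f 1) ≤ k + 1 := by
  -- `ψ` fixes `0` and `1` and rotates `{2, …, k}` by `l - 3` places.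
  let ψ (i : ℕ) : ℕ := if i < 2 then i else if i + l ≤ k + 3 then i + l - 3 else i + l - k - 2
  have hchord : ∀ i ∈ range (k + 1), G.Adj (f 1) (f i) → ¬ G.Adj (f 0) (f (ψ i)) := by
    intro i hi h1 h0
    rw [mem_range] at hi
    simp only [ψ] at h0
    split_ifs at h0 with h2 h3
    · interval_cases i
      · exact G.irrefl h0
      · exact G.irrefl h1
    · obtain ⟨x, c, hc, hlen⟩ := h.exists_isCycle_of_nested_chords (by omega) (by omega)
        (by omega) h0 h1
      exact hno ⟨x, c, hc, by omega⟩
    · obtain ⟨x, c, hc, hlen⟩ := h.exists_isCycle_of_crossing_chords (by omega) (by omega)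
        (by omega) h0 h1
      exact hno ⟨x, c, hc, by omega⟩
  have hψ : Set.InjOn ψ (range (k + 1)) := fun a ha b hb hab => by
    simp only [coe_range, Set.mem_Iio, ψ] at ha hb hab
    split_ifs at hab <;> omega
  have hmaps : ∀ i ∈ range (k + 1), ψ i ∈ range (k + 1) := fun i hi => by
    simp only [mem_range, ψ] at hi ⊢
    split_ifs <;> omega
  have hsurj := h.exists_eq_of_card_eq hcard
  calc G.degree (f 0) + G.degree (f 1)
      ≤ #{j ∈ range (k + 1) | G.Adj (f 0) (f j)} + #{i ∈ range (k + 1) | G.Adj (f 1) (f i)} :=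
        add_le_add (degree_le_card_filter fun w _ => hsurj w)
          (degree_le_card_filter fun w _ => hsurj w)
    _ ≤ #(range (k + 1)) := card_filter_add_card_filter_le_of_injOn ψ hψ hmaps hchord
    _ = k + 1 := card_range _

end SimpleGraph

theorem bondy_pancyclic_general {V : Type*} [Fintype V] [Nonempty V]
    (G : SimpleGraph V) [DecidableRel G.Adj]
    (hδ : (Fintype.card V : ℝ) / 2 < (G.minDegree : ℝ)) :
    ∀ l : ℕ, 3 ≤ l → l ≤ Fintype.card V →
      ∃ (v : V) (w : G.Walk v v), w.IsCycle ∧ w.length = l := by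
  intro l hl hln
  have hdeg : ∀ x, Fintype.card V < 2 * G.degree x := fun x => by
    have : (Fintype.card V : ℝ) < 2 * G.minDegree := by linarith
    have : Fintype.card V < 2 * G.minDegree := by exact_mod_cast this
    have := G.minDegree_le_degree x
    omega
  obtain ⟨c, hc⟩ := SimpleGraph.exists_isCycleSeq_of_forall_card_lt_two_mul_degree hdeg
  have hcard : Fintype.card V = Fintype.card V - 1 + 1 := by omega
  rcases hln.eq_or_lt with rfl | hlt
  · rw [hcard]
    exact hc.exists_isCycle (by omega)
  · by_contra hno
    have := hc.degree_add_degree_le hcard hl (by omega) hno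
    have := hdeg (c 0)
    have := hdeg (c 1)
    omega

/-- **Bondy.** If `G` is a graph on `n` vertices with minimum degree `δ > n/2`, then
`G` contains a cycle of every length `l` with `3 ≤ l ≤ n`. -/
theorem bondy_pancyclic {V : Type*} [Fintype V] [DecidableEq V] [Nonempty V]
    (G : SimpleGraph V) [DecidableRel G.Adj]
    (hδ : (Fintype.card V : ℝ) / 2 < (G.minDegree : ℝ)) :
    ∀ l : ℕ, 3 ≤ l → l ≤ Fintype.card V →
      ∃ (v : V) (w : G.Walk v v), w.IsCycle ∧ w.length = l :=
  bondy_pancyclic_general G hδ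
end

section
/- Let G be a graph on n vertices and m edges with no isolated vertices. Then the spectral radius satisfies λ₁ ≤ √(2m − n + 1) (Hong's bound). -/
open Finset

/-- **Hong's bound.** If `G` is a graph on `n` vertices with `m` edges and no isolated
vertices, then the spectral radius satisfies `λ₁ ≤ √(2m - n + 1)`. -/
theorem hong_bound {V : Type*} [Fintype V] [DecidableEq V] (G : SimpleGraph V)
    [DecidableRel G.Adj] (hiso : ∀ v : V, 0 < G.degree v) (lam : ℝ)
    (heig : ∃ x : V → ℝ, x ≠ 0 ∧ (G.adjMatrix ℝ).mulVec x = lam • x)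
    (hmax : ∀ μ : ℝ, (∃ x : V → ℝ, x ≠ 0 ∧ (G.adjMatrix ℝ).mulVec x = μ • x) → μ ≤ lam) :
    lam ≤ Real.sqrt (2 * (G.edgeFinset.card : ℝ) - (Fintype.card V : ℝ) + 1) := by
  classical
  obtain ⟨x, hx0, hx⟩ := heig
  rcases le_or_gt lam 0 with hl | hl
  · exact hl.trans (Real.sqrt_nonneg _)
  set y : V → ℝ := fun v => |x v| with hy
  obtain ⟨v0, hv0⟩ := Function.ne_iff.mp hx0
  have hne : (Finset.univ : Finset V).Nonempty := ⟨v0, mem_univ v0⟩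
  obtain ⟨u, -, hu⟩ := Finset.exists_max_image univ y hne
  have hyu : 0 < y u := lt_of_lt_of_le (abs_pos.mpr hv0) (hu v0 (mem_univ v0))
  -- squared eigen-equation at u
  have h2 : (G.adjMatrix ℝ).mulVec ((G.adjMatrix ℝ).mulVec x) = (lam ^ 2) • x := by
    rw [hx, Matrix.mulVec_smul, hx, smul_smul, sq]
  have key : lam ^ 2 * x u
      = ∑ w ∈ G.neighborFinset u, ∑ z ∈ G.neighborFinset w, x z := by
    have h := congrFun h2 u
    rw [SimpleGraph.adjMatrix_mulVec_apply] at h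
    simp only [Pi.smul_apply, smul_eq_mul] at h
    rw [← h]
    refine Finset.sum_congr rfl fun w _ => ?_
    rw [SimpleGraph.adjMatrix_mulVec_apply]
  -- combinatorial bound on sum of neighbor degrees
  have hcomb : (∑ w ∈ G.neighborFinset u, G.degree w) + Fintype.card V
      ≤ 2 * G.edgeFinset.card + 1 := by
    set S : Finset V := insert u (G.neighborFinset u) with hS
    have huS : u ∉ G.neighborFinset u := by
      simp [SimpleGraph.mem_neighborFinset]
    have hsplit : ∑ v, G.degree v = (∑ v ∈ S, G.degree v) + ∑ v ∈ Sᶜ, G.degree v :=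
      (Finset.sum_add_sum_compl S _).symm
    have hSsum : ∑ v ∈ S, G.degree v = G.degree u + ∑ w ∈ G.neighborFinset u, G.degree w := by
      rw [hS, Finset.sum_insert huS]
    have hcard : Sᶜ.card = Fintype.card V - (G.degree u + 1) := by
      rw [Finset.card_compl, hS, Finset.card_insert_of_notMem huS,
        SimpleGraph.card_neighborFinset_eq_degree]
    have hcompl : Sᶜ.card ≤ ∑ v ∈ Sᶜ, G.degree v := by
      calc Sᶜ.card = ∑ _v ∈ Sᶜ, 1 := by simp
        _ ≤ ∑ v ∈ Sᶜ, G.degree v := Finset.sum_le_sum fun v _ => hiso v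
    have hScard : S.card ≤ Fintype.card V := Finset.card_le_univ S
    have hScard' : S.card = G.degree u + 1 := by
      rw [hS, Finset.card_insert_of_notMem huS, SimpleGraph.card_neighborFinset_eq_degree]
    have htwo : ∑ v, G.degree v = 2 * G.edgeFinset.card :=
      SimpleGraph.sum_degrees_eq_twice_card_edges G
    omega
  -- real-valued bound
  have hreal : (∑ w ∈ G.neighborFinset u, (G.degree w : ℝ))
      ≤ 2 * (G.edgeFinset.card : ℝ) - (Fintype.card V : ℝ) + 1 := by
    have h := (Nat.cast_le (α := ℝ)).mpr hcomb
    push_cast at h ⊢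
    linarith
  have hbound : lam ^ 2 * y u
      ≤ (2 * (G.edgeFinset.card : ℝ) - (Fintype.card V : ℝ) + 1) * y u := by
    have h1 : lam ^ 2 * y u = |lam ^ 2 * x u| := by
      rw [abs_mul, abs_of_nonneg (sq_nonneg lam)]
    rw [h1, key]
    calc |∑ w ∈ G.neighborFinset u, ∑ z ∈ G.neighborFinset w, x z|
        ≤ ∑ w ∈ G.neighborFinset u, |∑ z ∈ G.neighborFinset w, x z| :=
          Finset.abs_sum_le_sum_abs _ _
      _ ≤ ∑ w ∈ G.neighborFinset u, ∑ z ∈ G.neighborFinset w, |x z| :=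
          Finset.sum_le_sum fun w _ => Finset.abs_sum_le_sum_abs _ _
      _ ≤ ∑ w ∈ G.neighborFinset u, ∑ _z ∈ G.neighborFinset w, y u :=
          Finset.sum_le_sum fun w _ => Finset.sum_le_sum fun z _ => hu z (mem_univ z)
      _ = (∑ w ∈ G.neighborFinset u, (G.degree w : ℝ)) * y u := by
          rw [Finset.sum_mul]
          refine Finset.sum_congr rfl fun w _ => ?_
          rw [Finset.sum_const, SimpleGraph.card_neighborFinset_eq_degree]
          simp [nsmul_eq_mul]
      _ ≤ (2 * (G.edgeFinset.card : ℝ) - (Fintype.card V : ℝ) + 1) * y u :=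
          mul_le_mul_of_nonneg_right hreal hyu.le
  have hsq : lam ^ 2 ≤ 2 * (G.edgeFinset.card : ℝ) - (Fintype.card V : ℝ) + 1 :=
    le_of_mul_le_mul_right hbound hyu
  calc lam = Real.sqrt (lam ^ 2) := (Real.sqrt_sq hl.le).symm
    _ ≤ _ := Real.sqrt_le_sqrt hsq
end

section
/- Let G be a graph on n vertices with m edges and minimum degree δ. Then λ₁ ≤ (δ−1)/2 + √(2m − nδ + (δ+1)²/4). -/
set_option maxHeartbeats 1000000

open Finset

private lemma hsfn_sum_mulVec {V : Type*} [Fintype V] [DecidableEq V]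
    (G : SimpleGraph V) [DecidableRel G.Adj] (y : V → ℝ) :
    ∑ v, ((G.adjMatrix ℝ).mulVec y) v = ∑ w, (G.degree w : ℝ) * y w := by
  simp only [Matrix.mulVec, dotProduct]
  rw [Finset.sum_comm]
  refine Finset.sum_congr rfl fun w _ => ?_
  rw [← Finset.sum_mul]
  congr 1
  simp [SimpleGraph.adjMatrix_apply, G.adj_comm, SimpleGraph.degree,
    SimpleGraph.neighborFinset_eq_filter, Finset.sum_ite]

private lemma hsfn_col_sum {V : Type*} [Fintype V] [DecidableEq V]
    (G : SimpleGraph V) [DecidableRel G.Adj] (v : V) :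
    ∑ w, G.adjMatrix ℝ w v = (G.degree v : ℝ) := by
  simp [SimpleGraph.adjMatrix_apply, G.adj_comm, SimpleGraph.degree,
    SimpleGraph.neighborFinset_eq_filter, Finset.sum_ite]

/-- **Hong–Shu–Fang / Nikiforov.** If `G` is a graph on `n` vertices with `m` edges and
minimum degree `δ`, then `λ₁ ≤ (δ-1)/2 + √(2m - nδ + (δ+1)²/4)`. -/
theorem hong_shu_fang_nikiforov {V : Type*} [Fintype V] [DecidableEq V] [Nonempty V]
    (G : SimpleGraph V) [DecidableRel G.Adj] (lam : ℝ)
    (heig : ∃ x : V → ℝ, x ≠ 0 ∧ (G.adjMatrix ℝ).mulVec x = lam • x)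
    (hmax : ∀ μ : ℝ, (∃ x : V → ℝ, x ≠ 0 ∧ (G.adjMatrix ℝ).mulVec x = μ • x) → μ ≤ lam) :
    lam ≤ ((G.minDegree : ℝ) - 1) / 2 +
      Real.sqrt (2 * (G.edgeFinset.card : ℝ) -
        (Fintype.card V : ℝ) * (G.minDegree : ℝ) + ((G.minDegree : ℝ) + 1) ^ 2 / 4) := by
  classical
  obtain ⟨x, hx0, hx⟩ := heig
  set A : Matrix V V ℝ := G.adjMatrix ℝ with hA
  set δ : ℝ := (G.minDegree : ℝ) with hδ
  set n : ℝ := (Fintype.card V : ℝ) with hn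
  set m : ℝ := (G.edgeFinset.card : ℝ) with hm
  set y : V → ℝ := fun v => |x v| with hy
  have hy0 : ∀ v, 0 ≤ y v := fun v => abs_nonneg _
  set t : ℝ := |lam| with htdef
  have ht0 : 0 ≤ t := abs_nonneg _
  have hδ0 : 0 ≤ δ := Nat.cast_nonneg _
  have hA0 : ∀ v w, 0 ≤ A v w := by
    intro v w; simp only [hA, SimpleGraph.adjMatrix_apply]; positivity
  have hA1 : ∀ v w, A v w ≤ 1 := by
    intro v w; simp only [hA, SimpleGraph.adjMatrix_apply]
    split <;> norm_num
  -- entrywise A y ≥ t y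
  have hAy : ∀ v, t * y v ≤ (A.mulVec y) v := by
    intro v
    have hxv : (A.mulVec x) v = lam * x v := by rw [hx]; simp
    calc t * y v = |lam * x v| := (abs_mul _ _).symm
      _ = |∑ w ∈ G.neighborFinset v, x w| := by
          rw [← hxv]; rw [hA, SimpleGraph.adjMatrix_mulVec_apply]
      _ ≤ ∑ w ∈ G.neighborFinset v, |x w| := Finset.abs_sum_le_sum_abs _ _
      _ = (A.mulVec y) v := by rw [hA, SimpleGraph.adjMatrix_mulVec_apply]
  -- max vertex
  obtain ⟨u, -, hu⟩ := Finset.exists_max_image Finset.univ y ⟨Classical.arbitrary V, mem_univ _⟩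
  have hyu : ∀ v, y v ≤ y u := fun v => hu v (mem_univ v)
  have hyu0 : 0 < y u := by
    obtain ⟨v, hv⟩ := Function.ne_iff.mp hx0
    exact lt_of_lt_of_le (abs_pos.mpr hv) (hyu v)
  set S : ℝ := ∑ v, y v with hS
  have hdsum : ∑ v, (G.degree v : ℝ) = 2 * m := by
    rw [hm, ← Nat.cast_sum]
    exact_mod_cast congrArg (Nat.cast : ℕ → ℝ) G.sum_degrees_eq_twice_card_edges
  have hδd : ∀ v, δ ≤ (G.degree v : ℝ) := fun v =>
    Nat.cast_le.mpr (G.minDegree_le_degree v)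
  have hnm : n * δ ≤ 2 * m := by
    rw [← hdsum, hn]
    calc (Fintype.card V : ℝ) * δ = ∑ _v : V, δ := by
          rw [Finset.sum_const, card_univ, nsmul_eq_mul]
      _ ≤ ∑ v, (G.degree v : ℝ) := Finset.sum_le_sum fun v _ => hδd v
  -- h1 : t * S ≤ ∑ d_v y_v
  have h1 : t * S ≤ ∑ v, (G.degree v : ℝ) * y v := by
    rw [← hsfn_sum_mulVec G y, hS, Finset.mul_sum]
    exact Finset.sum_le_sum fun v _ => hAy v
  -- h2 : ∑ d_v y_v ≤ δ S + (2m - nδ) y_u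
  have h2 : ∑ v, (G.degree v : ℝ) * y v ≤ δ * S + (2 * m - n * δ) * y u := by
    have : ∀ v : V, (G.degree v : ℝ) * y v ≤ δ * y v + ((G.degree v : ℝ) - δ) * y u := by
      intro v
      have h := mul_le_mul_of_nonneg_left (hyu v) (sub_nonneg.mpr (hδd v))
      nlinarith
    calc ∑ v, (G.degree v : ℝ) * y v
        ≤ ∑ v, (δ * y v + ((G.degree v : ℝ) - δ) * y u) := Finset.sum_le_sum fun v _ => this v
      _ = δ * S + (2 * m - n * δ) * y u := by
          rw [Finset.sum_add_distrib, ← Finset.mul_sum, ← Finset.sum_mul, hS]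
          congr 2
          rw [Finset.sum_sub_distrib, hdsum, Finset.sum_const, card_univ, nsmul_eq_mul, hn]
  -- h3 : (A(Ay))_u + (Ay)_u ≤ ∑ d_v y_v
  have h3 : (A.mulVec (A.mulVec y)) u + (A.mulVec y) u ≤ ∑ v, (G.degree v : ℝ) * y v := by
    have e1 : ∑ v, A u v * ∑ w, A v w * y w = ∑ v, (∑ w, A u w * A w v) * y v := by
      simp_rw [Finset.mul_sum]
      rw [Finset.sum_comm]
      refine Finset.sum_congr rfl fun v _ => ?_
      rw [Finset.sum_mul]
      exact Finset.sum_congr rfl fun w _ => by ring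
    have hexp : (A.mulVec (A.mulVec y)) u + (A.mulVec y) u
        = ∑ v, ((∑ w, A u w * A w v) + A u v) * y v := by
      simp only [Matrix.mulVec, dotProduct]
      rw [e1, ← Finset.sum_add_distrib]
      exact Finset.sum_congr rfl fun v _ => by ring
    rw [hexp]
    refine Finset.sum_le_sum fun v _ => mul_le_mul_of_nonneg_right ?_ (hy0 v)
    -- coefficient bound : ∑_w A u w * A w v + A u v ≤ d_v
    have hterm : ∀ w : V, A u w * A w v ≤ (if w = u then 0 else A w v) := by
      intro w
      by_cases hw : w = u
      · subst hw
        simp [hA, SimpleGraph.adjMatrix_apply]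
      · simp only [if_neg hw]
        nlinarith [hA0 w v, hA1 u w, hA0 u w]
    have hstep : ∑ w, A u w * A w v ≤ (G.degree v : ℝ) - A u v := by
      calc ∑ w, A u w * A w v ≤ ∑ w, (if w = u then 0 else A w v) :=
            Finset.sum_le_sum fun w _ => hterm w
        _ = (∑ w, A w v) - A u v := by
            rw [← Finset.add_sum_erase _ (fun w => if w = u then (0:ℝ) else A w v)
                  (Finset.mem_univ u),
                ← Finset.add_sum_erase _ (fun w => A w v) (Finset.mem_univ u)]
            rw [if_pos rfl,
              Finset.sum_congr rfl (fun w hw => if_neg (Finset.ne_of_mem_erase hw))]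
            ring
        _ = (G.degree v : ℝ) - A u v := by rw [hsfn_col_sum G v]
    linarith
  -- h4 : t² y_u + t y_u ≤ (A(Ay))_u + (Ay)_u
  have h4 : t * t * y u + t * y u ≤ (A.mulVec (A.mulVec y)) u + (A.mulVec y) u := by
    have hA2 : t * ((A.mulVec y) u) ≤ (A.mulVec (A.mulVec y)) u := by
      calc t * ((A.mulVec y) u) = ∑ w ∈ G.neighborFinset u, t * y w := by
            rw [hA, SimpleGraph.adjMatrix_mulVec_apply, Finset.mul_sum]
        _ ≤ ∑ w ∈ G.neighborFinset u, (A.mulVec y) w :=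
            Finset.sum_le_sum fun w _ => hAy w
        _ = (A.mulVec (A.mulVec y)) u := by
            rw [hA]; simp only [SimpleGraph.adjMatrix_mulVec_apply]
    have := hAy u
    nlinarith [mul_le_mul_of_nonneg_left (hAy u) ht0]
  -- combine
  set R : ℝ := 2 * m - n * δ + (δ + 1) ^ 2 / 4 with hR
  have hlamt : lam ≤ t := le_abs_self lam
  by_cases hcase : t ≤ δ
  · -- easy case : δ ≤ (δ-1)/2 + √R
    have h5 : (δ + 1) / 2 ≤ Real.sqrt R := by
      rw [show (δ + 1) / 2 = Real.sqrt (((δ + 1) / 2) ^ 2) by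
        rw [Real.sqrt_sq (by linarith)]]
      apply Real.sqrt_le_sqrt
      rw [hR]; nlinarith
    linarith
  · push_neg at hcase
    have ht0' : 0 < t := lt_of_le_of_lt hδ0 hcase
    have P1 : (t * t + t) * y u ≤ δ * S + (2 * m - n * δ) * y u := by nlinarith
    have P2 : (t - δ) * S ≤ (2 * m - n * δ) * y u := by nlinarith
    have P3 : (t * t + t) * (t - δ) * y u ≤ t * (2 * m - n * δ) * y u := by
      have e1 := mul_le_mul_of_nonneg_left P1 (le_of_lt (sub_pos.mpr hcase))
      have e2 := mul_le_mul_of_nonneg_left P2 hδ0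
      nlinarith
    have P4 : (t + 1) * (t - δ) ≤ 2 * m - n * δ := by
      have h := le_of_mul_le_mul_right (by linarith [P3] : (t * t + t) * (t - δ) * y u ≤ t * (2 * m - n * δ) * y u) hyu0
      have := le_of_mul_le_mul_left (by nlinarith : t * ((t + 1) * (t - δ)) ≤ t * (2 * m - n * δ)) ht0'
      linarith
    have hq : (t - (δ - 1) / 2) ^ 2 ≤ R := by rw [hR]; nlinarith
    have h5 : t - (δ - 1) / 2 ≤ Real.sqrt R := by
      calc t - (δ - 1) / 2 ≤ |t - (δ - 1) / 2| := le_abs_self _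
        _ = Real.sqrt ((t - (δ - 1) / 2) ^ 2) := (Real.sqrt_sq_eq_abs _).symm
        _ ≤ Real.sqrt R := Real.sqrt_le_sqrt hq
    linarith
end

section
/- For any graph G, the spectral radius satisfies λ₁ ≤ (−1 + √(1 + 4·max over vertices v of the sum of degrees over the closed neighborhood N[v]))/2; equivalently, λ₁² + λ₁ ≤ max_v Σ_{u ∈ N[v]} d(u). -/
/-- The spectral radius of a graph satisfies
`λ₁ ≤ (-1 + √(1 + 4 max_v Σ_{u ∈ N[v]} d(u)))/2`; equivalently
`λ₁² + λ₁ ≤ max_v Σ_{u ∈ N[v]} d(u)`. -/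
theorem spectralRadius_le_closed_neighborhood_bound {V : Type*} [Fintype V]
    [DecidableEq V] [Nonempty V] (G : SimpleGraph V) [DecidableRel G.Adj] (lam : ℝ)
    (heig : ∃ x : V → ℝ, x ≠ 0 ∧ (G.adjMatrix ℝ).mulVec x = lam • x)
    (hmax : ∀ μ : ℝ, (∃ x : V → ℝ, x ≠ 0 ∧ (G.adjMatrix ℝ).mulVec x = μ • x) → μ ≤ lam) :
    lam ≤ (-1 + Real.sqrt (1 + 4 *
      (Finset.univ.sup' Finset.univ_nonempty
        (fun v => ∑ u ∈ insert v (G.neighborFinset v), G.degree u) : ℕ))) / 2 ∧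
    lam ^ 2 + lam ≤
      (Finset.univ.sup' Finset.univ_nonempty
        (fun v => ∑ u ∈ insert v (G.neighborFinset v), G.degree u) : ℕ) := by
  set N : ℕ := Finset.univ.sup' Finset.univ_nonempty
      (fun v => ∑ u ∈ insert v (G.neighborFinset v), G.degree u) with hN
  set A : Matrix V V ℝ := G.adjMatrix ℝ with hA
  obtain ⟨x, hx0, hx⟩ := heig
  set B : Matrix V V ℝ := A * A + A with hB
  -- B is entrywise nonnegative
  have hBnn : ∀ i j, 0 ≤ B i j := by
    intro i j
    have h1 : 0 ≤ (A * A) i j := by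
      rw [Matrix.mul_apply]
      exact Finset.sum_nonneg fun k _ => mul_nonneg (by simp [hA, SimpleGraph.adjMatrix_apply]; positivity)
        (by simp [hA, SimpleGraph.adjMatrix_apply]; positivity)
    have h2 : (0:ℝ) ≤ A i j := by simp [hA, SimpleGraph.adjMatrix_apply]; positivity
    simpa [hB] using add_nonneg h1 h2
  -- row sums of A are degrees
  have hArow : ∀ i, ∑ j, A i j = (G.degree i : ℝ) := by
    intro i
    rw [hA]
    simp only [SimpleGraph.adjMatrix_apply]
    rw [Finset.sum_boole]
    rw [SimpleGraph.degree, SimpleGraph.neighborFinset_eq_filter]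
  -- row sums of B
  have hBrow : ∀ i, ∑ j, B i j = ((∑ u ∈ insert i (G.neighborFinset i), G.degree u : ℕ) : ℝ) := by
    intro i
    have hAA : ∑ j, (A * A) i j = ∑ u ∈ G.neighborFinset i, (G.degree u : ℝ) := by
      simp only [Matrix.mul_apply]
      rw [Finset.sum_comm]
      have : ∀ k, ∑ j, A i k * A k j = A i k * (G.degree k : ℝ) := by
        intro k; rw [← Finset.mul_sum, hArow]
      rw [Finset.sum_congr rfl fun k _ => this k]
      have h0 : ∀ k, A i k * (G.degree k : ℝ) = if G.Adj i k then (G.degree k : ℝ) else 0 := by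
        intro k; simp [hA, SimpleGraph.adjMatrix_apply, ite_mul]
      rw [Finset.sum_congr rfl fun k _ => h0 k, ← Finset.sum_filter]
      apply Finset.sum_congr
      · rw [SimpleGraph.neighborFinset_eq_filter]
      · intros; rfl
    have hins : ((∑ u ∈ insert i (G.neighborFinset i), G.degree u : ℕ) : ℝ)
        = (G.degree i : ℝ) + ∑ u ∈ G.neighborFinset i, (G.degree u : ℝ) := by
      rw [Finset.sum_insert (by simp)]
      push_cast; ring
    simp only [hB, Matrix.add_apply, Finset.sum_add_distrib, hAA, hArow, hins]
    ring
  -- x is an eigenvector of B with eigenvalue lam^2 + lam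
  have hBx : B.mulVec x = (lam ^ 2 + lam) • x := by
    rw [hB, Matrix.add_mulVec, ← Matrix.mulVec_mulVec, hx, Matrix.mulVec_smul, hx]
    ext j; simp [smul_smul]; ring
  -- choose coordinate of maximal absolute value
  obtain ⟨i, -, hi⟩ := Finset.exists_max_image (Finset.univ : Finset V) (fun j => |x j|)
    ⟨Classical.arbitrary V, Finset.mem_univ _⟩
  have hxi : 0 < |x i| := by
    by_contra h
    push_neg at h
    apply hx0
    ext j
    have h0 : |x j| = 0 := le_antisymm (le_trans (hi j (Finset.mem_univ j)) h) (abs_nonneg _)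
    simpa using abs_eq_zero.mp h0
  -- key inequality
  have hkey : |lam ^ 2 + lam| ≤ (N : ℝ) := by
    have heq : (lam ^ 2 + lam) * x i = ∑ j, B i j * x j := by
      have h := congrFun hBx i
      simp [Matrix.mulVec, dotProduct] at h
      linarith [h]
    have h1 : |lam ^ 2 + lam| * |x i| = |∑ j, B i j * x j| := by
      rw [← abs_mul, heq]
    have h2 : |∑ j, B i j * x j| ≤ ∑ j, B i j * |x i| := by
      refine le_trans (Finset.abs_sum_le_sum_abs _ _) (Finset.sum_le_sum fun j _ => ?_)
      rw [abs_mul, abs_of_nonneg (hBnn i j)]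
      exact mul_le_mul_of_nonneg_left (hi j (Finset.mem_univ j)) (hBnn i j)
    have h3 : ∑ j, B i j * |x i| = ((∑ u ∈ insert i (G.neighborFinset i), G.degree u : ℕ) : ℝ) * |x i| := by
      rw [← Finset.sum_mul, hBrow]
    have h4 : ((∑ u ∈ insert i (G.neighborFinset i), G.degree u : ℕ) : ℝ) ≤ (N : ℝ) := by
      have h5 := Finset.le_sup' (f := fun v => ∑ u ∈ insert v (G.neighborFinset v), G.degree u)
        (Finset.mem_univ i)
      exact_mod_cast h5
    have := h1.trans_le (h2.trans_eq h3)
    have := le_of_mul_le_mul_right this hxi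
    linarith
  have hR0 : (0:ℝ) ≤ (N : ℝ) := Nat.cast_nonneg _
  have h2nd : lam ^ 2 + lam ≤ (N : ℝ) := le_trans (le_abs_self _) hkey
  refine ⟨?_, h2nd⟩
  have hsq : (2 * lam + 1) ^ 2 ≤ 1 + 4 * (N : ℝ) := by nlinarith
  have h5 : 2 * lam + 1 ≤ Real.sqrt (1 + 4 * (N : ℝ)) := by
    calc 2 * lam + 1 ≤ |2 * lam + 1| := le_abs_self _
    _ = Real.sqrt ((2 * lam + 1) ^ 2) := by rw [Real.sqrt_sq_eq_abs]
    _ ≤ Real.sqrt (1 + 4 * (N : ℝ)) := Real.sqrt_le_sqrt hsq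
  linarith
end

section
/- For any graph G, the number of walks of length k satisfies w_k ≤ M·w_{k−2} − w_{k−1}, where M = max over vertices v of the sum of degrees over the closed neighborhood N[v], and w_j denotes the number of walks of length j in G. -/
/-- For any graph and `k ≥ 2`, the numbers of walks satisfy
`w_k ≤ M · w_{k-2} - w_{k-1}`, where `M = max_v Σ_{u ∈ N[v]} d(u)` and `w_j` is the
number of walks of length `j`. -/
theorem walks_inequality {V : Type*} [Fintype V] [DecidableEq V] [Nonempty V]
    (G : SimpleGraph V) [DecidableRel G.Adj] (k : ℕ) (hk : 2 ≤ k) :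
    ((∑ i : V, ∑ j : V, (G.adjMatrix ℕ ^ k) i j : ℕ) : ℤ) ≤
      (Finset.univ.sup' Finset.univ_nonempty
          (fun v => ∑ u ∈ insert v (G.neighborFinset v), G.degree u) : ℕ) *
        (∑ i : V, ∑ j : V, (G.adjMatrix ℕ ^ (k - 2)) i j : ℕ) -
        (∑ i : V, ∑ j : V, (G.adjMatrix ℕ ^ (k - 1)) i j : ℕ) := by
  obtain ⟨m, rfl⟩ : ∃ m, k = m + 2 := ⟨k - 2, by omega⟩
  set A := G.adjMatrix ℕ with hA
  set M := (Finset.univ.sup' Finset.univ_nonempty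
      (fun v => ∑ u ∈ insert v (G.neighborFinset v), G.degree u)) with hM
  have hrowsum : ∀ v : V, ∑ j : V, A v j = G.degree v := by
    intro v
    simp [hA, SimpleGraph.adjMatrix_apply, Finset.sum_boole, SimpleGraph.degree,
      SimpleGraph.neighborFinset_eq_filter]
  have hrow : ∀ B : Matrix V V ℕ,
      ∑ i : V, ∑ j : V, (B * A) i j = ∑ v : V, (∑ i : V, B i v) * G.degree v := by
    intro B
    simp only [Matrix.mul_apply]
    calc ∑ i : V, ∑ j : V, ∑ v : V, B i v * A v j
        = ∑ i : V, ∑ v : V, ∑ j : V, B i v * A v j :=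
          Finset.sum_congr rfl fun i _ => Finset.sum_comm
      _ = ∑ i : V, ∑ v : V, B i v * G.degree v :=
          Finset.sum_congr rfl fun i _ => Finset.sum_congr rfl fun v _ => by
            rw [← Finset.mul_sum, hrowsum]
      _ = ∑ v : V, ∑ i : V, B i v * G.degree v := Finset.sum_comm
      _ = ∑ v : V, (∑ i : V, B i v) * G.degree v :=
          Finset.sum_congr rfl fun v _ => (Finset.sum_mul _ _ _).symm
  set s : V → ℕ := fun v => ∑ i : V, (A ^ m) i v with hs
  have hw1 : ∑ i : V, ∑ j : V, (A ^ (m + 1)) i j = ∑ v : V, s v * G.degree v := by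
    rw [pow_succ, hrow]
  have hcol : ∀ v : V, ∑ i : V, (A ^ (m + 1)) i v = ∑ u : V, s u * A u v := by
    intro v
    rw [pow_succ]
    simp only [Matrix.mul_apply]
    rw [Finset.sum_comm]
    congr 1; ext u; rw [Finset.sum_mul]
  have hw2 : ∑ i : V, ∑ j : V, (A ^ (m + 2)) i j
      = ∑ u : V, s u * (∑ v ∈ G.neighborFinset u, G.degree v) := by
    rw [show m + 2 = (m + 1) + 1 from rfl, pow_succ, hrow]
    calc ∑ v : V, (∑ i : V, (A ^ (m + 1)) i v) * G.degree v
        = ∑ v : V, ∑ u : V, s u * A u v * G.degree v := by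
          congr 1; ext v; rw [hcol, Finset.sum_mul]
      _ = ∑ u : V, s u * ∑ v ∈ G.neighborFinset u, G.degree v := by
          rw [Finset.sum_comm]
          congr 1; ext u
          rw [Finset.mul_sum]
          rw [SimpleGraph.neighborFinset_eq_filter, Finset.sum_filter]
          congr 1; ext v
          by_cases h : G.Adj u v <;> simp [hA, h, mul_comm]
  have key : (∑ i : V, ∑ j : V, (A ^ (m + 2)) i j) + (∑ i : V, ∑ j : V, (A ^ (m + 1)) i j)
      ≤ M * ∑ i : V, ∑ j : V, (A ^ m) i j := by
    rw [hw1, hw2, ← Finset.sum_add_distrib]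
    have hsum : ∀ i : V, ∑ j : V, (A ^ m) i j = ∑ j : V, (A ^ m) i j := fun _ => rfl
    have : ∑ i : V, ∑ j : V, (A ^ m) i j = ∑ v : V, s v := by
      rw [Finset.sum_comm]
    rw [this, Finset.mul_sum]
    apply Finset.sum_le_sum
    intro u _
    have h1 : s u * (∑ v ∈ G.neighborFinset u, G.degree v) + s u * G.degree u
        = s u * (∑ v ∈ insert u (G.neighborFinset u), G.degree v) := by
      rw [Finset.sum_insert (G.notMem_neighborFinset_self u)]
      ring
    rw [h1, mul_comm M (s u)]
    apply Nat.mul_le_mul_left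
    exact Finset.le_sup' (fun v => ∑ u ∈ insert v (G.neighborFinset v), G.degree u)
      (Finset.mem_univ u)
  have h2 : ((∑ i : V, ∑ j : V, (A ^ (m + 2)) i j : ℕ) : ℤ)
      + ((∑ i : V, ∑ j : V, (A ^ (m + 1)) i j : ℕ) : ℤ)
      ≤ (M : ℤ) * ((∑ i : V, ∑ j : V, (A ^ m) i j : ℕ) : ℤ) := by
    exact_mod_cast key
  simp only [show m + 2 - 2 = m from rfl, show m + 2 - 1 = m + 1 from rfl]
  linarith
end
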